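/- arXiv:2302.08396 — 6 statements merged into one kernel-verified Lean document; each statement's English description precedes it below -/
import Mathlib

section
/- For every real q with 0<q<1 and all polynomials f,g∈ℂ[x], one has the identity of polynomials f·𝒟_q g = 𝒟_q[(𝒮_q f − (1/α)·U₁·𝒟_q f)·g] − (1/α)·𝒮_q(g·𝒟_q f). -/
open Polynomial

noncomputable section AW

/-- The map `x(z) = (z + z⁻¹)/2`. -/
def awXmap (z : ℂ) : ℂ := (z + z⁻¹) / 2

/-- The positive square root `q^{1/2}` of `q`, as a complex number. -/
def awSqrt (q : ℝ) : ℂ := (Real.sqrt q : ℂ)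

/-- `D` satisfies the defining (pointwise) property of the Askey–Wilson operator `𝒟_q`. -/
def IsAWDiff (q : ℝ) (D : ℂ[X] → ℂ[X]) : Prop :=
  ∀ f : ℂ[X], ∀ z : ℂ, z ≠ 0 → z ≠ 1 → z ≠ -1 →
    (D f).eval (awXmap z) =
      (f.eval (awXmap (awSqrt q * z)) - f.eval (awXmap ((awSqrt q)⁻¹ * z))) /
        (awXmap (awSqrt q * z) - awXmap ((awSqrt q)⁻¹ * z))

/-- `S` satisfies the defining (pointwise) property of the averaging operator `𝒮_q`. -/
def IsAWAvg (q : ℝ) (S : ℂ[X] → ℂ[X]) : Prop :=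
  ∀ f : ℂ[X], ∀ z : ℂ, z ≠ 0 → z ≠ 1 → z ≠ -1 →
    (S f).eval (awXmap z) =
      (f.eval (awXmap (awSqrt q * z)) + f.eval (awXmap ((awSqrt q)⁻¹ * z))) / 2

/-- `α = (q^{1/2} + q^{-1/2})/2`. -/
def awAlpha (q : ℝ) : ℂ := (awSqrt q + (awSqrt q)⁻¹) / 2

/-- `α_n = (q^{n/2} + q^{-n/2})/2`. -/
def awAlphaN (q : ℝ) (n : ℕ) : ℂ := ((awSqrt q) ^ n + (awSqrt q)⁻¹ ^ n) / 2

/-- `γ_n = (q^{n/2} - q^{-n/2})/(q^{1/2} - q^{-1/2})`. -/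
def awGammaN (q : ℝ) (n : ℕ) : ℂ :=
  ((awSqrt q) ^ n - (awSqrt q)⁻¹ ^ n) / (awSqrt q - (awSqrt q)⁻¹)

/-- `α_n` for integer `n` (this satisfies the conventions `α_{-1} = α`). -/
def awAlphaZ (q : ℝ) (n : ℤ) : ℂ := ((awSqrt q) ^ n + (awSqrt q) ^ (-n)) / 2

/-- `γ_n` for integer `n` (this satisfies the conventions `γ_{-1} = -1`). -/
def awGammaZ (q : ℝ) (n : ℤ) : ℂ :=
  ((awSqrt q) ^ n - (awSqrt q) ^ (-n)) / (awSqrt q - (awSqrt q)⁻¹)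

/-- `γ_n! = γ_1 ⋯ γ_n` (with `γ_0! = 1`). -/
def awGammaFact (q : ℝ) (n : ℕ) : ℂ := ∏ j ∈ Finset.range n, awGammaN q (j + 1)

/-- The polynomial `U₁(x) = (α² - 1)·x`. -/
def awU1 (q : ℝ) : ℂ[X] := C ((awAlpha q) ^ 2 - 1) * X

/-- The polynomial `U₂(x) = (α² - 1)·(x² - 1)`. -/
def awU2 (q : ℝ) : ℂ[X] := C ((awAlpha q) ^ 2 - 1) * (X ^ 2 - 1)

/-- The action `𝐃_q` on linear functionals: `⟨𝐃_q u, f⟩ = -⟨u, 𝒟_q f⟩`. -/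
def awDdual (D : ℂ[X] → ℂ[X]) (v : ℂ[X] → ℂ) : ℂ[X] → ℂ := fun f => -(v (D f))

/-- The action `𝐒_q` on linear functionals: `⟨𝐒_q u, f⟩ = ⟨u, 𝒮_q f⟩`. -/
def awSdual (S : ℂ[X] → ℂ[X]) (v : ℂ[X] → ℂ) : ℂ[X] → ℂ := fun f => v (S f)

end AW

set_option maxHeartbeats 4000000 in
private lemma aw_core (s z F0 FA FB Ga Gb DG DFA DFB SFA SFB SG DH IA AL xa xb : ℂ)
    (hs : s ≠ 0) (hz : z ≠ 0) (hd0 : s^2-1 ≠ 0) (he0 : z^2-1 ≠ 0)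
    (hu0 : s^2*z^2-1 ≠ 0) (hw0 : z^2-s^2 ≠ 0) (hAL0 : AL ≠ 0)
    (hDH : DH * ((s^2-1)*(z^2-1)) = ((SFA - IA*((AL^2-1)*xa)*DFA)*Ga - (SFB - IA*((AL^2-1)*xb)*DFB)*Gb) * (2*s*z))
    (hSG : SG * 2 = Ga*DFA + Gb*DFB)
    (hDG : DG * ((s^2-1)*(z^2-1)) = (Ga - Gb)*(2*s*z))
    (hDFA : DFA * ((s^2-1)*(s^2*z^2-1)) = (FA - F0)*(2*s^2*z))
    (hDFB : DFB * ((s^2-1)*(z^2-s^2)) = (F0 - FB)*(2*s^2*z))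
    (hSFA : SFA * 2 = FA + F0)
    (hSFB : SFB * 2 = F0 + FB)
    (hIA : IA * AL = 1)
    (hAL : AL * (2*s) = s^2+1)
    (hxa : xa * (2*s*z) = s^2*z^2+1)
    (hxb : xb * (2*s*z) = z^2+s^2) :
    F0 * DG = DH - IA * SG := by
  have hE : ((s^2-1)*(z^2-1))^2 * 2^3 * ((s^2-1)*(s^2*z^2-1)) * ((s^2-1)*(z^2-s^2)) * AL * (2*s)^2 * (2*s*z)^2 ≠ 0 := by
    exact mul_ne_zero (mul_ne_zero (mul_ne_zero (mul_ne_zero (mul_ne_zero (mul_ne_zero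
      (pow_ne_zero _ (mul_ne_zero hd0 he0)) (pow_ne_zero _ two_ne_zero))
      (mul_ne_zero hd0 hu0)) (mul_ne_zero hd0 hw0)) hAL0)
      (pow_ne_zero _ (mul_ne_zero two_ne_zero hs)))
      (pow_ne_zero _ (mul_ne_zero (mul_ne_zero two_ne_zero hs) hz))
  refine mul_right_cancel₀ hE ?_
  linear_combination ((128:ℂ)*s^4*z^4*AL + (-128:ℂ)*s^4*z^6*AL + (-128:ℂ)*s^6*z^2*AL + (-256:ℂ)*s^6*z^4*AL + (256:ℂ)*s^6*z^6*AL + (128:ℂ)*s^6*z^8*AL + (384:ℂ)*s^8*z^2*AL + (128:ℂ)*s^8*z^4*AL + (-128:ℂ)*s^8*z^6*AL + (-384:ℂ)*s^8*z^8*AL + (-384:ℂ)*s^10*z^2*AL + (-128:ℂ)*s^10*z^4*AL + (128:ℂ)*s^10*z^6*AL + (384:ℂ)*s^10*z^8*AL + (128:ℂ)*s^12*z^2*AL + (256:ℂ)*s^12*z^4*AL + (-256:ℂ)*s^12*z^6*AL + (-128:ℂ)*s^12*z^8*AL + (-128:ℂ)*s^14*z^4*AL + (128:ℂ)*s^14*z^6*AL)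 * hDH +
    ((-64:ℂ)*s^4*z^4*IA*AL + (128:ℂ)*s^4*z^6*IA*AL + (-64:ℂ)*s^4*z^8*IA*AL + (64:ℂ)*s^6*z^2*IA*AL + (128:ℂ)*s^6*z^4*IA*AL + (-384:ℂ)*s^6*z^6*IA*AL + (128:ℂ)*s^6*z^8*IA*AL + (64:ℂ)*s^6*z^10*IA*AL + (-256:ℂ)*s^8*z^2*IA*AL + (64:ℂ)*s^8*z^4*IA*AL + (384:ℂ)*s^8*z^6*IA*AL + (64:ℂ)*s^8*z^8*IA*AL + (-256:ℂ)*s^8*z^10*IA*AL + (384:ℂ)*s^10*z^2*IA*AL + (-256:ℂ)*s^10*z^4*IA*AL + (-256:ℂ)*s^10*z^6*IA*AL + (-256:ℂ)*s^10*z^8*IA*AL + (384:ℂ)*s^10*z^10*IA*AL + (-256:ℂ)*s^12*z^2*IA*AL + (64:ℂ)*s^12*z^4*IA*AL + (384:ℂ)*s^12*z^6*IA*AL + (64:ℂ)*s^12*z^8*IA*AL + (-256:ℂ)*s^12*z^10*IA*AL + (64:ℂ)*s^14*z^2*IA*AL + (128:ℂ)*s^14*z^4*IA*AL + (-384:ℂ)*s^14*z^6*IA*AL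 + (128:ℂ)*s^14*z^8*IA*AL + (64:ℂ)*s^14*z^10*IA*AL + (-64:ℂ)*s^16*z^4*IA*AL + (128:ℂ)*s^16*z^6*IA*AL + (-64:ℂ)*s^16*z^8*IA*AL) * hSG +
    ((-128:ℂ)*s^4*z^4*F0*AL + (128:ℂ)*s^4*z^6*F0*AL + (128:ℂ)*s^6*z^2*F0*AL + (256:ℂ)*s^6*z^4*F0*AL + (-256:ℂ)*s^6*z^6*F0*AL + (-128:ℂ)*s^6*z^8*F0*AL + (-384:ℂ)*s^8*z^2*F0*AL + (-128:ℂ)*s^8*z^4*F0*AL + (128:ℂ)*s^8*z^6*F0*AL + (384:ℂ)*s^8*z^8*F0*AL + (384:ℂ)*s^10*z^2*F0*AL + (128:ℂ)*s^10*z^4*F0*AL + (-128:ℂ)*s^10*z^6*F0*AL + (-384:ℂ)*s^10*z^8*F0*AL + (-128:ℂ)*s^12*z^2*F0*AL + (-256:ℂ)*s^12*z^4*F0*AL + (256:ℂ)*s^12*z^6*F0*AL + (128:ℂ)*s^12*z^8*F0*AL + (128:ℂ)*s^14*z^4*F0*AL + (-128:ℂ)*s^14*z^6*F0*AL) * hDG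 +
    ((-64:ℂ)*s^4*z^4*Ga*IA*AL + (128:ℂ)*s^4*z^6*Ga*IA*AL + (-64:ℂ)*s^4*z^8*Ga*IA*AL + (256:ℂ)*s^5*z^5*Ga*IA*AL*xa + (-256:ℂ)*s^5*z^5*Ga*IA*AL^3*xa + (-256:ℂ)*s^5*z^7*Ga*IA*AL*xa + (256:ℂ)*s^5*z^7*Ga*IA*AL^3*xa + (64:ℂ)*s^6*z^2*Ga*IA*AL + (64:ℂ)*s^6*z^4*Ga*IA*AL + (-320:ℂ)*s^6*z^6*Ga*IA*AL + (192:ℂ)*s^6*z^8*Ga*IA*AL + (-256:ℂ)*s^7*z^3*Ga*IA*AL*xa + (256:ℂ)*s^7*z^3*Ga*IA*AL^3*xa + (-256:ℂ)*s^7*z^5*Ga*IA*AL*xa + (256:ℂ)*s^7*z^5*Ga*IA*AL^3*xa + (512:ℂ)*s^7*z^7*Ga*IA*AL*xa + (-512:ℂ)*s^7*z^7*Ga*IA*AL^3*xa + (-192:ℂ)*s^8*z^2*Ga*IA*AL + (192:ℂ)*s^8*z^4*Ga*IA*AL + (192:ℂ)*s^8*z^6*Ga*IA*AL + (-192:ℂ)*s^8*z^8*Ga*IA*AL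 + (512:ℂ)*s^9*z^3*Ga*IA*AL*xa + (-512:ℂ)*s^9*z^3*Ga*IA*AL^3*xa + (-256:ℂ)*s^9*z^5*Ga*IA*AL*xa + (256:ℂ)*s^9*z^5*Ga*IA*AL^3*xa + (-256:ℂ)*s^9*z^7*Ga*IA*AL*xa + (256:ℂ)*s^9*z^7*Ga*IA*AL^3*xa + (192:ℂ)*s^10*z^2*Ga*IA*AL + (-320:ℂ)*s^10*z^4*Ga*IA*AL + (64:ℂ)*s^10*z^6*Ga*IA*AL + (64:ℂ)*s^10*z^8*Ga*IA*AL + (-256:ℂ)*s^11*z^3*Ga*IA*AL*xa + (256:ℂ)*s^11*z^3*Ga*IA*AL^3*xa + (256:ℂ)*s^11*z^5*Ga*IA*AL*xa + (-256:ℂ)*s^11*z^5*Ga*IA*AL^3*xa + (-64:ℂ)*s^12*z^2*Ga*IA*AL + (128:ℂ)*s^12*z^4*Ga*IA*AL + (-64:ℂ)*s^12*z^6*Ga*IA*AL) * hDFA +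
    ((64:ℂ)*s^4*z^2*Gb*IA*AL + (-128:ℂ)*s^4*z^4*Gb*IA*AL + (64:ℂ)*s^4*z^6*Gb*IA*AL + (256:ℂ)*s^5*z^3*Gb*IA*AL*xb + (-256:ℂ)*s^5*z^3*Gb*IA*AL^3*xb + (-256:ℂ)*s^5*z^5*Gb*IA*AL*xb + (256:ℂ)*s^5*z^5*Gb*IA*AL^3*xb + (-192:ℂ)*s^6*z^2*Gb*IA*AL + (320:ℂ)*s^6*z^4*Gb*IA*AL + (-64:ℂ)*s^6*z^6*Gb*IA*AL + (-64:ℂ)*s^6*z^8*Gb*IA*AL + (-512:ℂ)*s^7*z^3*Gb*IA*AL*xb + (512:ℂ)*s^7*z^3*Gb*IA*AL^3*xb + (256:ℂ)*s^7*z^5*Gb*IA*AL*xb + (-256:ℂ)*s^7*z^5*Gb*IA*AL^3*xb + (256:ℂ)*s^7*z^7*Gb*IA*AL*xb + (-256:ℂ)*s^7*z^7*Gb*IA*AL^3*xb + (192:ℂ)*s^8*z^2*Gb*IA*AL + (-192:ℂ)*s^8*z^4*Gb*IA*AL + (-192:ℂ)*s^8*z^6*Gb*IA*AL + (192:ℂ)*s^8*z^8*Gb*IA*AL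 + (256:ℂ)*s^9*z^3*Gb*IA*AL*xb + (-256:ℂ)*s^9*z^3*Gb*IA*AL^3*xb + (256:ℂ)*s^9*z^5*Gb*IA*AL*xb + (-256:ℂ)*s^9*z^5*Gb*IA*AL^3*xb + (-512:ℂ)*s^9*z^7*Gb*IA*AL*xb + (512:ℂ)*s^9*z^7*Gb*IA*AL^3*xb + (-64:ℂ)*s^10*z^2*Gb*IA*AL + (-64:ℂ)*s^10*z^4*Gb*IA*AL + (320:ℂ)*s^10*z^6*Gb*IA*AL + (-192:ℂ)*s^10*z^8*Gb*IA*AL + (-256:ℂ)*s^11*z^5*Gb*IA*AL*xb + (256:ℂ)*s^11*z^5*Gb*IA*AL^3*xb + (256:ℂ)*s^11*z^7*Gb*IA*AL*xb + (-256:ℂ)*s^11*z^7*Gb*IA*AL^3*xb + (64:ℂ)*s^12*z^4*Gb*IA*AL + (-128:ℂ)*s^12*z^6*Gb*IA*AL + (64:ℂ)*s^12*z^8*Gb*IA*AL) * hDFB +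
    ((128:ℂ)*s^5*z^5*Ga*AL + (-128:ℂ)*s^5*z^7*Ga*AL + (-128:ℂ)*s^7*z^3*Ga*AL + (-256:ℂ)*s^7*z^5*Ga*AL + (256:ℂ)*s^7*z^7*Ga*AL + (128:ℂ)*s^7*z^9*Ga*AL + (384:ℂ)*s^9*z^3*Ga*AL + (128:ℂ)*s^9*z^5*Ga*AL + (-128:ℂ)*s^9*z^7*Ga*AL + (-384:ℂ)*s^9*z^9*Ga*AL + (-384:ℂ)*s^11*z^3*Ga*AL + (-128:ℂ)*s^11*z^5*Ga*AL + (128:ℂ)*s^11*z^7*Ga*AL + (384:ℂ)*s^11*z^9*Ga*AL + (128:ℂ)*s^13*z^3*Ga*AL + (256:ℂ)*s^13*z^5*Ga*AL + (-256:ℂ)*s^13*z^7*Ga*AL + (-128:ℂ)*s^13*z^9*Ga*AL + (-128:ℂ)*s^15*z^5*Ga*AL + (128:ℂ)*s^15*z^7*Ga*AL) * hSFA +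
    ((-128:ℂ)*s^5*z^5*Gb*AL + (128:ℂ)*s^5*z^7*Gb*AL + (128:ℂ)*s^7*z^3*Gb*AL + (256:ℂ)*s^7*z^5*Gb*AL + (-256:ℂ)*s^7*z^7*Gb*AL + (-128:ℂ)*s^7*z^9*Gb*AL + (-384:ℂ)*s^9*z^3*Gb*AL + (-128:ℂ)*s^9*z^5*Gb*AL + (128:ℂ)*s^9*z^7*Gb*AL + (384:ℂ)*s^9*z^9*Gb*AL + (384:ℂ)*s^11*z^3*Gb*AL + (128:ℂ)*s^11*z^5*Gb*AL + (-128:ℂ)*s^11*z^7*Gb*AL + (-384:ℂ)*s^11*z^9*Gb*AL + (-128:ℂ)*s^13*z^3*Gb*AL + (-256:ℂ)*s^13*z^5*Gb*AL + (256:ℂ)*s^13*z^7*Gb*AL + (128:ℂ)*s^13*z^9*Gb*AL + (128:ℂ)*s^15*z^5*Gb*AL + (-128:ℂ)*s^15*z^7*Gb*AL) * hSFB +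
    ((-128:ℂ)*s^6*z^3*FB*Gb + (128:ℂ)*s^6*z^3*F0*Gb + (256:ℂ)*s^6*z^5*FB*Gb + (-128:ℂ)*s^6*z^5*FA*Ga + (-256:ℂ)*s^6*z^5*F0*Gb + (128:ℂ)*s^6*z^5*F0*Ga + (-128:ℂ)*s^6*z^7*FB*Gb + (256:ℂ)*s^6*z^7*FA*Ga + (128:ℂ)*s^6*z^7*F0*Gb + (-256:ℂ)*s^6*z^7*F0*Ga + (-128:ℂ)*s^6*z^9*FA*Ga + (128:ℂ)*s^6*z^9*F0*Ga + (-512:ℂ)*s^7*z^4*FB*Gb*xb + (512:ℂ)*s^7*z^4*FB*Gb*AL^2*xb + (512:ℂ)*s^7*z^4*F0*Gb*xb + (-512:ℂ)*s^7*z^4*F0*Gb*AL^2*xb + (512:ℂ)*s^7*z^6*FB*Gb*xb + (-512:ℂ)*s^7*z^6*FB*Gb*AL^2*xb + (512:ℂ)*s^7*z^6*FA*Ga*xa + (-512:ℂ)*s^7*z^6*FA*Ga*AL^2*xa + (-512:ℂ)*s^7*z^6*F0*Gb*xb + (512:ℂ)*s^7*z^6*F0*Gb*AL^2*xb + (-512:ℂ)*s^7*z^6*F0*Ga*xa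 + (512:ℂ)*s^7*z^6*F0*Ga*AL^2*xa + (-512:ℂ)*s^7*z^8*FA*Ga*xa + (512:ℂ)*s^7*z^8*FA*Ga*AL^2*xa + (512:ℂ)*s^7*z^8*F0*Ga*xa + (-512:ℂ)*s^7*z^8*F0*Ga*AL^2*xa + (384:ℂ)*s^8*z^3*FB*Gb + (128:ℂ)*s^8*z^3*FA*Ga + (-384:ℂ)*s^8*z^3*F0*Gb + (-128:ℂ)*s^8*z^3*F0*Ga + (-640:ℂ)*s^8*z^5*FB*Gb + (128:ℂ)*s^8*z^5*FA*Ga + (640:ℂ)*s^8*z^5*F0*Gb + (-128:ℂ)*s^8*z^5*F0*Ga + (128:ℂ)*s^8*z^7*FB*Gb + (-640:ℂ)*s^8*z^7*FA*Ga + (-128:ℂ)*s^8*z^7*F0*Gb + (640:ℂ)*s^8*z^7*F0*Ga + (128:ℂ)*s^8*z^9*FB*Gb + (384:ℂ)*s^8*z^9*FA*Ga + (-128:ℂ)*s^8*z^9*F0*Gb + (-384:ℂ)*s^8*z^9*F0*Ga + (1024:ℂ)*s^9*z^4*FB*Gb*xb + (-1024:ℂ)*s^9*z^4*FB*Gb*AL^2*xb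 + (-512:ℂ)*s^9*z^4*FA*Ga*xa + (512:ℂ)*s^9*z^4*FA*Ga*AL^2*xa + (-1024:ℂ)*s^9*z^4*F0*Gb*xb + (1024:ℂ)*s^9*z^4*F0*Gb*AL^2*xb + (512:ℂ)*s^9*z^4*F0*Ga*xa + (-512:ℂ)*s^9*z^4*F0*Ga*AL^2*xa + (-512:ℂ)*s^9*z^6*FB*Gb*xb + (512:ℂ)*s^9*z^6*FB*Gb*AL^2*xb + (-512:ℂ)*s^9*z^6*FA*Ga*xa + (512:ℂ)*s^9*z^6*FA*Ga*AL^2*xa + (512:ℂ)*s^9*z^6*F0*Gb*xb + (-512:ℂ)*s^9*z^6*F0*Gb*AL^2*xb + (512:ℂ)*s^9*z^6*F0*Ga*xa + (-512:ℂ)*s^9*z^6*F0*Ga*AL^2*xa + (-512:ℂ)*s^9*z^8*FB*Gb*xb + (512:ℂ)*s^9*z^8*FB*Gb*AL^2*xb + (1024:ℂ)*s^9*z^8*FA*Ga*xa + (-1024:ℂ)*s^9*z^8*FA*Ga*AL^2*xa + (512:ℂ)*s^9*z^8*F0*Gb*xb + (-512:ℂ)*s^9*z^8*F0*Gb*AL^2*xb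 + (-1024:ℂ)*s^9*z^8*F0*Ga*xa + (1024:ℂ)*s^9*z^8*F0*Ga*AL^2*xa + (-384:ℂ)*s^10*z^3*FB*Gb + (-384:ℂ)*s^10*z^3*FA*Ga + (384:ℂ)*s^10*z^3*F0*Gb + (384:ℂ)*s^10*z^3*F0*Ga + (384:ℂ)*s^10*z^5*FB*Gb + (384:ℂ)*s^10*z^5*FA*Ga + (-384:ℂ)*s^10*z^5*F0*Gb + (-384:ℂ)*s^10*z^5*F0*Ga + (384:ℂ)*s^10*z^7*FB*Gb + (384:ℂ)*s^10*z^7*FA*Ga + (-384:ℂ)*s^10*z^7*F0*Gb + (-384:ℂ)*s^10*z^7*F0*Ga + (-384:ℂ)*s^10*z^9*FB*Gb + (-384:ℂ)*s^10*z^9*FA*Ga + (384:ℂ)*s^10*z^9*F0*Gb + (384:ℂ)*s^10*z^9*F0*Ga + (-512:ℂ)*s^11*z^4*FB*Gb*xb + (512:ℂ)*s^11*z^4*FB*Gb*AL^2*xb + (1024:ℂ)*s^11*z^4*FA*Ga*xa + (-1024:ℂ)*s^11*z^4*FA*Ga*AL^2*xa + (512:ℂ)*s^11*z^4*F0*Gb*xb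 + (-512:ℂ)*s^11*z^4*F0*Gb*AL^2*xb + (-1024:ℂ)*s^11*z^4*F0*Ga*xa + (1024:ℂ)*s^11*z^4*F0*Ga*AL^2*xa + (-512:ℂ)*s^11*z^6*FB*Gb*xb + (512:ℂ)*s^11*z^6*FB*Gb*AL^2*xb + (-512:ℂ)*s^11*z^6*FA*Ga*xa + (512:ℂ)*s^11*z^6*FA*Ga*AL^2*xa + (512:ℂ)*s^11*z^6*F0*Gb*xb + (-512:ℂ)*s^11*z^6*F0*Gb*AL^2*xb + (512:ℂ)*s^11*z^6*F0*Ga*xa + (-512:ℂ)*s^11*z^6*F0*Ga*AL^2*xa + (1024:ℂ)*s^11*z^8*FB*Gb*xb + (-1024:ℂ)*s^11*z^8*FB*Gb*AL^2*xb + (-512:ℂ)*s^11*z^8*FA*Ga*xa + (512:ℂ)*s^11*z^8*FA*Ga*AL^2*xa + (-1024:ℂ)*s^11*z^8*F0*Gb*xb + (1024:ℂ)*s^11*z^8*F0*Gb*AL^2*xb + (512:ℂ)*s^11*z^8*F0*Ga*xa + (-512:ℂ)*s^11*z^8*F0*Ga*AL^2*xa + (128:ℂ)*s^12*z^3*FB*Gb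 + (384:ℂ)*s^12*z^3*FA*Ga + (-128:ℂ)*s^12*z^3*F0*Gb + (-384:ℂ)*s^12*z^3*F0*Ga + (128:ℂ)*s^12*z^5*FB*Gb + (-640:ℂ)*s^12*z^5*FA*Ga + (-128:ℂ)*s^12*z^5*F0*Gb + (640:ℂ)*s^12*z^5*F0*Ga + (-640:ℂ)*s^12*z^7*FB*Gb + (128:ℂ)*s^12*z^7*FA*Ga + (640:ℂ)*s^12*z^7*F0*Gb + (-128:ℂ)*s^12*z^7*F0*Ga + (384:ℂ)*s^12*z^9*FB*Gb + (128:ℂ)*s^12*z^9*FA*Ga + (-384:ℂ)*s^12*z^9*F0*Gb + (-128:ℂ)*s^12*z^9*F0*Ga + (-512:ℂ)*s^13*z^4*FA*Ga*xa + (512:ℂ)*s^13*z^4*FA*Ga*AL^2*xa + (512:ℂ)*s^13*z^4*F0*Ga*xa + (-512:ℂ)*s^13*z^4*F0*Ga*AL^2*xa + (512:ℂ)*s^13*z^6*FB*Gb*xb + (-512:ℂ)*s^13*z^6*FB*Gb*AL^2*xb + (512:ℂ)*s^13*z^6*FA*Ga*xa + (-512:ℂ)*s^13*z^6*FA*Ga*AL^2*xa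 + (-512:ℂ)*s^13*z^6*F0*Gb*xb + (512:ℂ)*s^13*z^6*F0*Gb*AL^2*xb + (-512:ℂ)*s^13*z^6*F0*Ga*xa + (512:ℂ)*s^13*z^6*F0*Ga*AL^2*xa + (-512:ℂ)*s^13*z^8*FB*Gb*xb + (512:ℂ)*s^13*z^8*FB*Gb*AL^2*xb + (512:ℂ)*s^13*z^8*F0*Gb*xb + (-512:ℂ)*s^13*z^8*F0*Gb*AL^2*xb + (-128:ℂ)*s^14*z^3*FA*Ga + (128:ℂ)*s^14*z^3*F0*Ga + (-128:ℂ)*s^14*z^5*FB*Gb + (256:ℂ)*s^14*z^5*FA*Ga + (128:ℂ)*s^14*z^5*F0*Gb + (-256:ℂ)*s^14*z^5*F0*Ga + (256:ℂ)*s^14*z^7*FB*Gb + (-128:ℂ)*s^14*z^7*FA*Ga + (-256:ℂ)*s^14*z^7*F0*Gb + (128:ℂ)*s^14*z^7*F0*Ga + (-128:ℂ)*s^14*z^9*FB*Gb + (128:ℂ)*s^14*z^9*F0*Gb) * hIA +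
    ((-64:ℂ)*s^4*z^5*FB*Gb + (64:ℂ)*s^4*z^5*FA*Ga + (64:ℂ)*s^4*z^5*F0*Gb + (-64:ℂ)*s^4*z^5*F0*Ga + (64:ℂ)*s^4*z^7*FB*Gb + (-64:ℂ)*s^4*z^7*FA*Ga + (-64:ℂ)*s^4*z^7*F0*Gb + (64:ℂ)*s^4*z^7*F0*Ga + (128:ℂ)*s^5*z^4*FB*Gb*xb + (-128:ℂ)*s^5*z^4*F0*Gb*xb + (-128:ℂ)*s^5*z^6*FB*Gb*xb + (-128:ℂ)*s^5*z^6*FA*Ga*xa + (128:ℂ)*s^5*z^6*F0*Gb*xb + (128:ℂ)*s^5*z^6*F0*Ga*xa + (128:ℂ)*s^5*z^8*FA*Ga*xa + (-128:ℂ)*s^5*z^8*F0*Ga*xa + (64:ℂ)*s^6*z^3*FB*Gb + (-64:ℂ)*s^6*z^3*FA*Ga + (-64:ℂ)*s^6*z^3*F0*Gb + (64:ℂ)*s^6*z^3*F0*Ga + (256:ℂ)*s^6*z^4*FB*Gb*AL*xb + (-256:ℂ)*s^6*z^4*F0*Gb*AL*xb + (128:ℂ)*s^6*z^5*FB*Gb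 + (-128:ℂ)*s^6*z^5*FA*Ga + (-128:ℂ)*s^6*z^5*F0*Gb + (128:ℂ)*s^6*z^5*F0*Ga + (-256:ℂ)*s^6*z^6*FB*Gb*AL*xb + (-256:ℂ)*s^6*z^6*FA*Ga*AL*xa + (256:ℂ)*s^6*z^6*F0*Gb*AL*xb + (256:ℂ)*s^6*z^6*F0*Ga*AL*xa + (-128:ℂ)*s^6*z^7*FB*Gb + (128:ℂ)*s^6*z^7*FA*Ga + (128:ℂ)*s^6*z^7*F0*Gb + (-128:ℂ)*s^6*z^7*F0*Ga + (256:ℂ)*s^6*z^8*FA*Ga*AL*xa + (-256:ℂ)*s^6*z^8*F0*Ga*AL*xa + (-64:ℂ)*s^6*z^9*FB*Gb + (64:ℂ)*s^6*z^9*FA*Ga + (64:ℂ)*s^6*z^9*F0*Gb + (-64:ℂ)*s^6*z^9*F0*Ga + (-128:ℂ)*s^7*z^4*FB*Gb*xb + (128:ℂ)*s^7*z^4*FA*Ga*xa + (128:ℂ)*s^7*z^4*F0*Gb*xb + (-128:ℂ)*s^7*z^4*F0*Ga*xa + (128:ℂ)*s^7*z^8*FB*Gb*xb + (-128:ℂ)*s^7*z^8*FA*Ga*xa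 + (-128:ℂ)*s^7*z^8*F0*Gb*xb + (128:ℂ)*s^7*z^8*F0*Ga*xa + (-192:ℂ)*s^8*z^3*FB*Gb + (192:ℂ)*s^8*z^3*FA*Ga + (192:ℂ)*s^8*z^3*F0*Gb + (-192:ℂ)*s^8*z^3*F0*Ga + (-512:ℂ)*s^8*z^4*FB*Gb*AL*xb + (256:ℂ)*s^8*z^4*FA*Ga*AL*xa + (512:ℂ)*s^8*z^4*F0*Gb*AL*xb + (-256:ℂ)*s^8*z^4*F0*Ga*AL*xa + (-64:ℂ)*s^8*z^5*FB*Gb + (64:ℂ)*s^8*z^5*FA*Ga + (64:ℂ)*s^8*z^5*F0*Gb + (-64:ℂ)*s^8*z^5*F0*Ga + (256:ℂ)*s^8*z^6*FB*Gb*AL*xb + (256:ℂ)*s^8*z^6*FA*Ga*AL*xa + (-256:ℂ)*s^8*z^6*F0*Gb*AL*xb + (-256:ℂ)*s^8*z^6*F0*Ga*AL*xa + (64:ℂ)*s^8*z^7*FB*Gb + (-64:ℂ)*s^8*z^7*FA*Ga + (-64:ℂ)*s^8*z^7*F0*Gb + (64:ℂ)*s^8*z^7*F0*Ga + (256:ℂ)*s^8*z^8*FB*Gb*AL*xb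 + (-512:ℂ)*s^8*z^8*FA*Ga*AL*xa + (-256:ℂ)*s^8*z^8*F0*Gb*AL*xb + (512:ℂ)*s^8*z^8*F0*Ga*AL*xa + (192:ℂ)*s^8*z^9*FB*Gb + (-192:ℂ)*s^8*z^9*FA*Ga + (-192:ℂ)*s^8*z^9*F0*Gb + (192:ℂ)*s^8*z^9*F0*Ga + (-128:ℂ)*s^9*z^4*FB*Gb*xb + (-128:ℂ)*s^9*z^4*FA*Ga*xa + (128:ℂ)*s^9*z^4*F0*Gb*xb + (128:ℂ)*s^9*z^4*F0*Ga*xa + (256:ℂ)*s^9*z^6*FB*Gb*xb + (256:ℂ)*s^9*z^6*FA*Ga*xa + (-256:ℂ)*s^9*z^6*F0*Gb*xb + (-256:ℂ)*s^9*z^6*F0*Ga*xa + (-128:ℂ)*s^9*z^8*FB*Gb*xb + (-128:ℂ)*s^9*z^8*FA*Ga*xa + (128:ℂ)*s^9*z^8*F0*Gb*xb + (128:ℂ)*s^9*z^8*F0*Ga*xa + (192:ℂ)*s^10*z^3*FB*Gb + (-192:ℂ)*s^10*z^3*FA*Ga + (-192:ℂ)*s^10*z^3*F0*Gb + (192:ℂ)*s^10*z^3*F0*Ga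 + (256:ℂ)*s^10*z^4*FB*Gb*AL*xb + (-512:ℂ)*s^10*z^4*FA*Ga*AL*xa + (-256:ℂ)*s^10*z^4*F0*Gb*AL*xb + (512:ℂ)*s^10*z^4*F0*Ga*AL*xa + (64:ℂ)*s^10*z^5*FB*Gb + (-64:ℂ)*s^10*z^5*FA*Ga + (-64:ℂ)*s^10*z^5*F0*Gb + (64:ℂ)*s^10*z^5*F0*Ga + (256:ℂ)*s^10*z^6*FB*Gb*AL*xb + (256:ℂ)*s^10*z^6*FA*Ga*AL*xa + (-256:ℂ)*s^10*z^6*F0*Gb*AL*xb + (-256:ℂ)*s^10*z^6*F0*Ga*AL*xa + (-64:ℂ)*s^10*z^7*FB*Gb + (64:ℂ)*s^10*z^7*FA*Ga + (64:ℂ)*s^10*z^7*F0*Gb + (-64:ℂ)*s^10*z^7*F0*Ga + (-512:ℂ)*s^10*z^8*FB*Gb*AL*xb + (256:ℂ)*s^10*z^8*FA*Ga*AL*xa + (512:ℂ)*s^10*z^8*F0*Gb*AL*xb + (-256:ℂ)*s^10*z^8*F0*Ga*AL*xa + (-192:ℂ)*s^10*z^9*FB*Gb + (192:ℂ)*s^10*z^9*FA*Ga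 + (192:ℂ)*s^10*z^9*F0*Gb + (-192:ℂ)*s^10*z^9*F0*Ga + (128:ℂ)*s^11*z^4*FB*Gb*xb + (-128:ℂ)*s^11*z^4*FA*Ga*xa + (-128:ℂ)*s^11*z^4*F0*Gb*xb + (128:ℂ)*s^11*z^4*F0*Ga*xa + (-128:ℂ)*s^11*z^8*FB*Gb*xb + (128:ℂ)*s^11*z^8*FA*Ga*xa + (128:ℂ)*s^11*z^8*F0*Gb*xb + (-128:ℂ)*s^11*z^8*F0*Ga*xa + (-64:ℂ)*s^12*z^3*FB*Gb + (64:ℂ)*s^12*z^3*FA*Ga + (64:ℂ)*s^12*z^3*F0*Gb + (-64:ℂ)*s^12*z^3*F0*Ga + (256:ℂ)*s^12*z^4*FA*Ga*AL*xa + (-256:ℂ)*s^12*z^4*F0*Ga*AL*xa + (-128:ℂ)*s^12*z^5*FB*Gb + (128:ℂ)*s^12*z^5*FA*Ga + (128:ℂ)*s^12*z^5*F0*Gb + (-128:ℂ)*s^12*z^5*F0*Ga + (-256:ℂ)*s^12*z^6*FB*Gb*AL*xb + (-256:ℂ)*s^12*z^6*FA*Ga*AL*xa + (256:ℂ)*s^12*z^6*F0*Gb*AL*xb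 + (256:ℂ)*s^12*z^6*F0*Ga*AL*xa + (128:ℂ)*s^12*z^7*FB*Gb + (-128:ℂ)*s^12*z^7*FA*Ga + (-128:ℂ)*s^12*z^7*F0*Gb + (128:ℂ)*s^12*z^7*F0*Ga + (256:ℂ)*s^12*z^8*FB*Gb*AL*xb + (-256:ℂ)*s^12*z^8*F0*Gb*AL*xb + (64:ℂ)*s^12*z^9*FB*Gb + (-64:ℂ)*s^12*z^9*FA*Ga + (-64:ℂ)*s^12*z^9*F0*Gb + (64:ℂ)*s^12*z^9*F0*Ga + (128:ℂ)*s^13*z^4*FA*Ga*xa + (-128:ℂ)*s^13*z^4*F0*Ga*xa + (-128:ℂ)*s^13*z^6*FB*Gb*xb + (-128:ℂ)*s^13*z^6*FA*Ga*xa + (128:ℂ)*s^13*z^6*F0*Gb*xb + (128:ℂ)*s^13*z^6*F0*Ga*xa + (128:ℂ)*s^13*z^8*FB*Gb*xb + (-128:ℂ)*s^13*z^8*F0*Gb*xb + (64:ℂ)*s^14*z^5*FB*Gb + (-64:ℂ)*s^14*z^5*FA*Ga + (-64:ℂ)*s^14*z^5*F0*Gb + (64:ℂ)*s^14*z^5*F0*Ga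 + (-64:ℂ)*s^14*z^7*FB*Gb + (64:ℂ)*s^14*z^7*FA*Ga + (64:ℂ)*s^14*z^7*F0*Gb + (-64:ℂ)*s^14*z^7*F0*Ga) * hAL +
    ((-64:ℂ)*s^4*z^5*FA*Ga + (64:ℂ)*s^4*z^5*F0*Ga + (64:ℂ)*s^4*z^7*FA*Ga + (-64:ℂ)*s^4*z^7*F0*Ga + (64:ℂ)*s^6*z^3*FA*Ga + (-64:ℂ)*s^6*z^3*F0*Ga + (192:ℂ)*s^6*z^5*FA*Ga + (-192:ℂ)*s^6*z^5*F0*Ga + (-256:ℂ)*s^6*z^7*FA*Ga + (256:ℂ)*s^6*z^7*F0*Ga + (-256:ℂ)*s^8*z^3*FA*Ga + (256:ℂ)*s^8*z^3*F0*Ga + (-128:ℂ)*s^8*z^5*FA*Ga + (128:ℂ)*s^8*z^5*F0*Ga + (384:ℂ)*s^8*z^7*FA*Ga + (-384:ℂ)*s^8*z^7*F0*Ga + (384:ℂ)*s^10*z^3*FA*Ga + (-384:ℂ)*s^10*z^3*F0*Ga + (-128:ℂ)*s^10*z^5*FA*Ga + (128:ℂ)*s^10*z^5*F0*Ga + (-256:ℂ)*s^10*z^7*FA*Ga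 + (256:ℂ)*s^10*z^7*F0*Ga + (-256:ℂ)*s^12*z^3*FA*Ga + (256:ℂ)*s^12*z^3*F0*Ga + (192:ℂ)*s^12*z^5*FA*Ga + (-192:ℂ)*s^12*z^5*F0*Ga + (64:ℂ)*s^12*z^7*FA*Ga + (-64:ℂ)*s^12*z^7*F0*Ga + (64:ℂ)*s^14*z^3*FA*Ga + (-64:ℂ)*s^14*z^3*F0*Ga + (-64:ℂ)*s^14*z^5*FA*Ga + (64:ℂ)*s^14*z^5*F0*Ga) * hxa +
    ((64:ℂ)*s^4*z^3*FB*Gb + (-64:ℂ)*s^4*z^3*F0*Gb + (-64:ℂ)*s^4*z^5*FB*Gb + (64:ℂ)*s^4*z^5*F0*Gb + (-256:ℂ)*s^6*z^3*FB*Gb + (256:ℂ)*s^6*z^3*F0*Gb + (192:ℂ)*s^6*z^5*FB*Gb + (-192:ℂ)*s^6*z^5*F0*Gb + (64:ℂ)*s^6*z^7*FB*Gb + (-64:ℂ)*s^6*z^7*F0*Gb + (384:ℂ)*s^8*z^3*FB*Gb + (-384:ℂ)*s^8*z^3*F0*Gb + (-128:ℂ)*s^8*z^5*FB*Gb + (128:ℂ)*s^8*z^5*F0*Gb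 + (-256:ℂ)*s^8*z^7*FB*Gb + (256:ℂ)*s^8*z^7*F0*Gb + (-256:ℂ)*s^10*z^3*FB*Gb + (256:ℂ)*s^10*z^3*F0*Gb + (-128:ℂ)*s^10*z^5*FB*Gb + (128:ℂ)*s^10*z^5*F0*Gb + (384:ℂ)*s^10*z^7*FB*Gb + (-384:ℂ)*s^10*z^7*F0*Gb + (64:ℂ)*s^12*z^3*FB*Gb + (-64:ℂ)*s^12*z^3*F0*Gb + (192:ℂ)*s^12*z^5*FB*Gb + (-192:ℂ)*s^12*z^5*F0*Gb + (-256:ℂ)*s^12*z^7*FB*Gb + (256:ℂ)*s^12*z^7*F0*Gb + (-64:ℂ)*s^14*z^5*FB*Gb + (64:ℂ)*s^14*z^5*F0*Gb + (64:ℂ)*s^14*z^7*FB*Gb + (-64:ℂ)*s^14*z^7*F0*Gb) * hxb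

/-- `f·𝒟_q g = 𝒟_q[(𝒮_q f − (1/α)·U₁·𝒟_q f)·g] − (1/α)·𝒮_q(g·𝒟_q f)`. -/
theorem stmt_1 (q : ℝ) (hq0 : 0 < q) (hq1 : q < 1)
    (D S : ℂ[X] → ℂ[X]) (hD : IsAWDiff q D) (hS : IsAWAvg q S) (f g : ℂ[X]) :
    f * D g =
      D ((S f - (1 / awAlpha q) • (awU1 q * D f)) * g) -
        (1 / awAlpha q) • S (g * D f) := by
  have hr0 : 0 < Real.sqrt q := Real.sqrt_pos.mpr hq0
  have hr1 : Real.sqrt q < 1 := by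
    nlinarith [Real.sq_sqrt hq0.le]
  rw [← sub_eq_zero]
  apply Polynomial.eq_zero_of_infinite_isRoot
  have hinj : Set.InjOn (fun t : ℝ => awXmap (t : ℂ)) (Set.Ioi 2 \ {(Real.sqrt q)⁻¹}) := by
    rintro a ⟨ha2, -⟩ b ⟨hb2, -⟩ hab
    have ha2 : (2:ℝ) < a := ha2
    have hb2 : (2:ℝ) < b := hb2
    have ha0 : (0:ℝ) < a := by linarith
    have hb0 : (0:ℝ) < b := by linarith
    simp only [awXmap] at hab
    have hab' : (a + a⁻¹)/2 = (b + b⁻¹)/2 := by exact_mod_cast hab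
    have h1 : a + a⁻¹ = b + b⁻¹ := by linarith
    have h2 : (a - b) * (a*b - 1) = a*b*((a + a⁻¹) - (b + b⁻¹)) := by
      field_simp
      ring
    rw [h1, sub_self, mul_zero] at h2
    rcases mul_eq_zero.mp h2 with h | h
    · exact sub_eq_zero.mp h
    · nlinarith
  have hinf : Set.Infinite ((fun t : ℝ => awXmap (t : ℂ)) '' (Set.Ioi 2 \ {(Real.sqrt q)⁻¹})) :=
    Set.Infinite.image hinj ((Set.Ioi_infinite (2:ℝ)).diff (Set.finite_singleton _))
  refine hinf.mono ?_
  rintro x ⟨t, ⟨ht2m, htnem⟩, rfl⟩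
  have ht2 : (2:ℝ) < t := ht2m
  have htne : t ≠ (Real.sqrt q)⁻¹ := htnem
  have hrt1 : Real.sqrt q * t ≠ 1 := by
    intro h
    exact htne (eq_inv_of_mul_eq_one_left (by linarith [mul_comm (Real.sqrt q) t ▸ h] : t * Real.sqrt q = 1))
  have hs : awSqrt q ≠ 0 := by
    simp only [awSqrt, ne_eq, Complex.ofReal_eq_zero]
    exact hr0.ne'
  have hz : ((t:ℝ):ℂ) ≠ 0 := by
    exact_mod_cast (by linarith : t ≠ 0)
  have hz1 : ((t:ℝ):ℂ) ≠ 1 := by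
    exact_mod_cast (by linarith : t ≠ (1:ℝ))
  have hzm : ((t:ℝ):ℂ) ≠ -1 := by
    exact_mod_cast (by linarith : t ≠ (-1:ℝ))
  have hszc : awSqrt q * ((t:ℝ):ℂ) = ((Real.sqrt q * t : ℝ) : ℂ) := by
    simp only [awSqrt]; push_cast; ring
  have hrt0 : (0:ℝ) < Real.sqrt q * t := by positivity
  have hsz0 : awSqrt q * ((t:ℝ):ℂ) ≠ 0 := by
    rw [hszc]; exact_mod_cast hrt0.ne'
  have hsz1 : awSqrt q * ((t:ℝ):ℂ) ≠ 1 := by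
    rw [hszc]; exact_mod_cast hrt1
  have hszm : awSqrt q * ((t:ℝ):ℂ) ≠ -1 := by
    rw [hszc]
    exact_mod_cast (ne_of_gt (by linarith : (-1:ℝ) < Real.sqrt q * t))
  have hizc : (awSqrt q)⁻¹ * ((t:ℝ):ℂ) = (((Real.sqrt q)⁻¹ * t : ℝ) : ℂ) := by
    simp only [awSqrt]; push_cast; ring
  have hinv1 : 1 < (Real.sqrt q)⁻¹ := (one_lt_inv₀ hr0).mpr hr1
  have hit2 : (2:ℝ) < (Real.sqrt q)⁻¹ * t := by
    nlinarith [mul_lt_mul_of_pos_right hinv1 (by linarith : (0:ℝ) < t)]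
  have hiz0 : (awSqrt q)⁻¹ * ((t:ℝ):ℂ) ≠ 0 := by
    rw [hizc]; exact_mod_cast (by linarith : (Real.sqrt q)⁻¹ * t ≠ 0)
  have hiz1 : (awSqrt q)⁻¹ * ((t:ℝ):ℂ) ≠ 1 := by
    rw [hizc]; exact_mod_cast (by linarith : (Real.sqrt q)⁻¹ * t ≠ 1)
  have hizm : (awSqrt q)⁻¹ * ((t:ℝ):ℂ) ≠ -1 := by
    rw [hizc]; exact_mod_cast (by linarith : (Real.sqrt q)⁻¹ * t ≠ -1)
  have hd0 : (awSqrt q)^2 - 1 ≠ 0 := by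
    have h : (awSqrt q)^2 - 1 = ((Real.sqrt q^2 - 1 : ℝ) : ℂ) := by
      simp only [awSqrt]; push_cast; ring
    rw [h]
    exact_mod_cast (by nlinarith : Real.sqrt q^2 - 1 ≠ 0)
  have he0 : ((t:ℝ):ℂ)^2 - 1 ≠ 0 := by
    have h : ((t:ℝ):ℂ)^2 - 1 = ((t^2 - 1 : ℝ) : ℂ) := by push_cast; ring
    rw [h]
    exact_mod_cast (by nlinarith : t^2 - 1 ≠ 0)
  have hu0r : Real.sqrt q^2 * t^2 - 1 ≠ 0 := by
    intro h
    have h2 : (Real.sqrt q * t - 1) * (Real.sqrt q * t + 1) = 0 := by linear_combination h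
    rcases mul_eq_zero.mp h2 with h3 | h3
    · exact hrt1 (by linarith)
    · linarith
  have hu0 : (awSqrt q)^2 * ((t:ℝ):ℂ)^2 - 1 ≠ 0 := by
    have h : (awSqrt q)^2 * ((t:ℝ):ℂ)^2 - 1 = ((Real.sqrt q^2 * t^2 - 1 : ℝ) : ℂ) := by
      simp only [awSqrt]; push_cast; ring
    rw [h]
    exact_mod_cast hu0r
  have hw0 : ((t:ℝ):ℂ)^2 - (awSqrt q)^2 ≠ 0 := by
    have h : ((t:ℝ):ℂ)^2 - (awSqrt q)^2 = ((t^2 - Real.sqrt q^2 : ℝ) : ℂ) := by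
      simp only [awSqrt]; push_cast; ring
    rw [h]
    exact_mod_cast (by nlinarith : t^2 - Real.sqrt q^2 ≠ 0)
  have hALc : awAlpha q = (((Real.sqrt q + (Real.sqrt q)⁻¹)/2 : ℝ) : ℂ) := by
    simp only [awAlpha, awSqrt]; push_cast; ring
  have hAL0 : awAlpha q ≠ 0 := by
    rw [hALc]
    exact_mod_cast (by positivity : (Real.sqrt q + (Real.sqrt q)⁻¹)/2 ≠ 0)
  have hD1 : ((awSqrt q)^2-1) * (((t:ℝ):ℂ)^2-1) ≠ 0 := mul_ne_zero hd0 he0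
  have hD2 : ((awSqrt q)^2-1) * ((awSqrt q)^2*((t:ℝ):ℂ)^2-1) ≠ 0 := mul_ne_zero hd0 hu0
  have hD3 : ((awSqrt q)^2-1) * (((t:ℝ):ℂ)^2-(awSqrt q)^2) ≠ 0 := mul_ne_zero hd0 hw0
  have hdiff : awXmap (awSqrt q * ((t:ℝ):ℂ)) - awXmap ((awSqrt q)⁻¹ * ((t:ℝ):ℂ))
      = ((awSqrt q)^2-1) * (((t:ℝ):ℂ)^2-1) / (2 * awSqrt q * ((t:ℝ):ℂ)) := by
    simp only [awXmap]
    field_simp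
    ring
  have hdiffA : awXmap (awSqrt q * (awSqrt q * ((t:ℝ):ℂ))) - awXmap ((t:ℝ):ℂ)
      = ((awSqrt q)^2-1) * ((awSqrt q)^2*((t:ℝ):ℂ)^2-1) / (2 * (awSqrt q)^2 * ((t:ℝ):ℂ)) := by
    simp only [awXmap]
    field_simp
    ring
  have hdiffB : awXmap ((t:ℝ):ℂ) - awXmap ((awSqrt q)⁻¹ * ((awSqrt q)⁻¹ * ((t:ℝ):ℂ)))
      = ((awSqrt q)^2-1) * (((t:ℝ):ℂ)^2-(awSqrt q)^2) / (2 * (awSqrt q)^2 * ((t:ℝ):ℂ)) := by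
    have earg : (awSqrt q)⁻¹ * ((awSqrt q)⁻¹ * ((t:ℝ):ℂ)) = ((t:ℝ):ℂ) / (awSqrt q)^2 := by
      ring
    rw [earg]
    simp only [awXmap, inv_div]
    field_simp
    have c1 : ((t:ℝ):ℂ) * ((t:ℝ):ℂ)⁻¹ = 1 := mul_inv_cancel₀ hz
    have c2 : awSqrt q * (awSqrt q)⁻¹ = 1 := mul_inv_cancel₀ hs
    ring
  simp only [Set.mem_setOf_eq, IsRoot.def, eval_sub, eval_mul, eval_smul, smul_eq_mul]
  rw [sub_eq_zero]
  refine aw_core (awSqrt q) ((t:ℝ):ℂ)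
    (f.eval (awXmap ((t:ℝ):ℂ)))
    (f.eval (awXmap (awSqrt q * (awSqrt q * ((t:ℝ):ℂ)))))
    (f.eval (awXmap ((awSqrt q)⁻¹ * ((awSqrt q)⁻¹ * ((t:ℝ):ℂ)))))
    (g.eval (awXmap (awSqrt q * ((t:ℝ):ℂ))))
    (g.eval (awXmap ((awSqrt q)⁻¹ * ((t:ℝ):ℂ))))
    ((D g).eval (awXmap ((t:ℝ):ℂ)))
    ((D f).eval (awXmap (awSqrt q * ((t:ℝ):ℂ))))
    ((D f).eval (awXmap ((awSqrt q)⁻¹ * ((t:ℝ):ℂ))))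
    ((S f).eval (awXmap (awSqrt q * ((t:ℝ):ℂ))))
    ((S f).eval (awXmap ((awSqrt q)⁻¹ * ((t:ℝ):ℂ))))
    ((S (g * D f)).eval (awXmap ((t:ℝ):ℂ)))
    ((D ((S f - (1 / awAlpha q) • (awU1 q * D f)) * g)).eval (awXmap ((t:ℝ):ℂ)))
    (1 / awAlpha q) (awAlpha q)
    (awXmap (awSqrt q * ((t:ℝ):ℂ)))
    (awXmap ((awSqrt q)⁻¹ * ((t:ℝ):ℂ)))
    hs hz hd0 he0 hu0 hw0 hAL0
    ?_ ?_ ?_ ?_ ?_ ?_ ?_ ?_ ?_ ?_ ?_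
  · rw [hD _ _ hz hz1 hzm, hdiff, div_div_eq_mul_div, div_mul_cancel₀ _ hD1]
    simp only [eval_mul, eval_sub, eval_smul, smul_eq_mul, awU1, eval_C, eval_X]
    ring
  · rw [hS _ _ hz hz1 hzm]
    simp only [eval_mul]
    rw [div_mul_cancel₀ _ (two_ne_zero : (2:ℂ) ≠ 0)]
  · rw [hD _ _ hz hz1 hzm, hdiff, div_div_eq_mul_div, div_mul_cancel₀ _ hD1]
  · rw [hD _ _ hsz0 hsz1 hszm, inv_mul_cancel_left₀ hs, hdiffA, div_div_eq_mul_div,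
      div_mul_cancel₀ _ hD2]
  · rw [hD _ _ hiz0 hiz1 hizm, mul_inv_cancel_left₀ hs, hdiffB, div_div_eq_mul_div,
      div_mul_cancel₀ _ hD3]
  · rw [hS _ _ hsz0 hsz1 hszm, inv_mul_cancel_left₀ hs, div_mul_cancel₀ _ (two_ne_zero : (2:ℂ) ≠ 0)]
  · rw [hS _ _ hiz0 hiz1 hizm, mul_inv_cancel_left₀ hs, div_mul_cancel₀ _ (two_ne_zero : (2:ℂ) ≠ 0)]
  · exact one_div_mul_cancel hAL0
  · simp only [awAlpha]
    field_simp
  · simp only [awXmap]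
    field_simp
  · simp only [awXmap]
    field_simp
end

section
/- For every real q with 0<q<1, every integer n≥0, and every polynomial f∈ℂ[x], one has the identity of polynomials 𝒟_q^n(𝒮_q f) = α_n·𝒮_q(𝒟_q^n f) + γ_n·U₁·𝒟_q^{n+1} f, where 𝒟_q^n denotes the n-fold iterate of 𝒟_q. -/
open Polynomial

section Aux
variable {q : ℝ}

lemma aw_ne_pm (z : ℂ) (hz1 : z ≠ 1) (hzm : z ≠ -1) : z ^ 2 - 1 ≠ 0 := by
  intro h
  have h2 : (z - 1) * (z + 1) = 0 := by linear_combination h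
  rcases mul_eq_zero.mp h2 with h | h
  · exact hz1 (by linear_combination h)
  · exact hzm (by linear_combination h)

lemma aw_sqrt_pos (hq0 : 0 < q) : 0 < Real.sqrt q := Real.sqrt_pos.mpr hq0

lemma aw_a_ne (hq0 : 0 < q) : awSqrt q ≠ 0 := by
  simp [awSqrt, Complex.ofReal_ne_zero, (aw_sqrt_pos hq0).ne']

lemma aw_a_sq (hq0 : 0 < q) : (awSqrt q) ^ 2 = (q : ℂ) := by
  rw [awSqrt]
  norm_cast
  rw [Real.sq_sqrt hq0.le]

lemma aw_a_sq_ne_one (hq0 : 0 < q) (hq1 : q < 1) : (awSqrt q) ^ 2 - 1 ≠ 0 := by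
  rw [aw_a_sq hq0, sub_ne_zero]
  intro h
  have : q = 1 := by exact_mod_cast h
  linarith

lemma aw_denom (a z : ℂ) (ha : a ≠ 0) (hz : z ≠ 0) :
    awXmap (a * z) - awXmap (a⁻¹ * z) = (a ^ 2 - 1) * (z ^ 2 - 1) / (2 * a * z) := by
  simp only [awXmap]
  field_simp
  ring

/-- refined evaluation formula for D with factored denominator -/
lemma IsAWDiff.eval' {D : ℂ[X] → ℂ[X]} (hD : IsAWDiff q D) (hq0 : 0 < q) (hq1 : q < 1)
    (f : ℂ[X]) (z : ℂ) (hz0 : z ≠ 0) (hz1 : z ≠ 1) (hzm : z ≠ -1) :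
    (D f).eval (awXmap z) =
      2 * awSqrt q * z * (f.eval (awXmap (awSqrt q * z)) - f.eval (awXmap ((awSqrt q)⁻¹ * z))) /
        ((awSqrt q ^ 2 - 1) * (z ^ 2 - 1)) := by
  have ha := aw_a_ne hq0
  have ha2 := aw_a_sq_ne_one hq0 hq1
  have hz2 : z ^ 2 - 1 ≠ 0 := aw_ne_pm z hz1 hzm
  rw [hD f z hz0 hz1 hzm, aw_denom _ _ ha hz0, div_div_eq_mul_div]
  ring


lemma IsAWDiff.eval_up {D : ℂ[X] → ℂ[X]} (hD : IsAWDiff q D) (hq0 : 0 < q) (hq1 : q < 1)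
    (f : ℂ[X]) (z : ℂ) (haz0 : awSqrt q * z ≠ 0) (haz1 : awSqrt q * z ≠ 1)
    (hazm : awSqrt q * z ≠ -1) :
    (D f).eval (awXmap (awSqrt q * z)) =
      2 * awSqrt q ^ 2 * z *
          (f.eval (awXmap (awSqrt q * (awSqrt q * z))) - f.eval (awXmap z)) /
        ((awSqrt q ^ 2 - 1) * (awSqrt q ^ 2 * z ^ 2 - 1)) := by
  have ha := aw_a_ne hq0
  have ha2 := aw_a_sq_ne_one hq0 hq1
  have haz2 : (awSqrt q * z) ^ 2 - 1 ≠ 0 := aw_ne_pm _ haz1 hazm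
  have h2 : awSqrt q ^ 2 * z ^ 2 - 1 ≠ 0 := by
    intro h; apply haz2; linear_combination h
  rw [hD.eval' hq0 hq1 f _ haz0 haz1 hazm, inv_mul_cancel_left₀ ha,
    div_eq_div_iff (mul_ne_zero ha2 haz2) (mul_ne_zero ha2 h2)]
  ring

lemma IsAWDiff.eval_down {D : ℂ[X] → ℂ[X]} (hD : IsAWDiff q D) (hq0 : 0 < q) (hq1 : q < 1)
    (f : ℂ[X]) (z : ℂ) (hiz0 : (awSqrt q)⁻¹ * z ≠ 0) (hiz1 : (awSqrt q)⁻¹ * z ≠ 1)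
    (hizm : (awSqrt q)⁻¹ * z ≠ -1) :
    (D f).eval (awXmap ((awSqrt q)⁻¹ * z)) =
      2 * awSqrt q ^ 2 * z *
          (f.eval (awXmap z) - f.eval (awXmap ((awSqrt q)⁻¹ * ((awSqrt q)⁻¹ * z)))) /
        ((awSqrt q ^ 2 - 1) * (z ^ 2 - awSqrt q ^ 2)) := by
  have ha := aw_a_ne hq0
  have ha2 := aw_a_sq_ne_one hq0 hq1
  have hiz2 : ((awSqrt q)⁻¹ * z) ^ 2 - 1 ≠ 0 := aw_ne_pm _ hiz1 hizm
  have h3 : z ^ 2 - awSqrt q ^ 2 ≠ 0 := by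
    intro h; apply hiz2
    have : ((awSqrt q)⁻¹ * z) ^ 2 - 1 = (z ^ 2 - awSqrt q ^ 2) / awSqrt q ^ 2 := by
      field_simp
    rw [this, h, zero_div]
  rw [hD.eval' hq0 hq1 f _ hiz0 hiz1 hizm, mul_inv_cancel_left₀ ha,
    div_eq_div_iff (mul_ne_zero ha2 hiz2) (mul_ne_zero ha2 h3)]
  field_simp

/-- extensionality via evaluation at real points `t > 2 + 2/√q` -/
lemma aw_ext (hq0 : 0 < q) (p r : ℂ[X])
    (h : ∀ t : ℝ, 2 + 2 / Real.sqrt q < t → p.eval (awXmap (t : ℂ)) = r.eval (awXmap (t : ℂ))) :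
    p = r := by
  have hs := aw_sqrt_pos hq0
  have hM2 : 2 < 2 + 2 / Real.sqrt q := by
    have : 0 < 2 / Real.sqrt q := by positivity
    linarith
  apply Polynomial.eq_of_infinite_eval_eq
  have hinj : Set.InjOn (fun t : ℝ => awXmap (t : ℂ)) (Set.Ioi (2 + 2 / Real.sqrt q)) := by
    intro s hs' t ht' hst
    simp only [awXmap] at hst
    have hsM : (2:ℝ) < s := lt_trans hM2 hs'
    have htM : (2:ℝ) < t := lt_trans hM2 ht'
    have hs0 : s ≠ 0 := by linarith
    have ht0 : t ≠ 0 := by linarith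
    have hre : (s + s⁻¹) / 2 = (t + t⁻¹) / 2 := by
      have : (((s + s⁻¹) / 2 : ℝ) : ℂ) = (((t + t⁻¹) / 2 : ℝ) : ℂ) := by push_cast; exact hst
      exact_mod_cast this
    have key : (s - t) * (s * t - 1) = 0 := by
      field_simp at hre
      nlinarith [hre]
    have hst1 : s * t - 1 > 0 := by nlinarith
    have := mul_eq_zero.mp key
    rcases this with h | h
    · linarith [sub_eq_zero.mp h]
    · linarith
  have hinf : ((fun t : ℝ => awXmap (t : ℂ)) '' Set.Ioi (2 + 2 / Real.sqrt q)).Infinite :=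
    (Set.Ioi_infinite _).image hinj
  apply hinf.mono
  rintro _ ⟨t, ht, rfl⟩
  exact h t ht

end Aux

section Main
variable {q : ℝ} {D S : ℂ[X] → ℂ[X]}

lemma c_ne_of_two_lt (u : ℝ) (hu : 2 < u) :
    (u : ℂ) ≠ 0 ∧ (u : ℂ) ≠ 1 ∧ (u : ℂ) ≠ -1 := by
  refine ⟨fun h => ?_, fun h => ?_, fun h => ?_⟩
  · have : u = 0 := by exact_mod_cast h
    linarith
  · have : u = 1 := by exact_mod_cast h
    linarith
  · have : u = -1 := by exact_mod_cast h
    linarith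

lemma aw_good (hq0 : 0 < q) (hq1 : q < 1) (t : ℝ) (ht : 2 + 2 / Real.sqrt q < t) :
    2 < t ∧ 2 < Real.sqrt q * t ∧ 2 < t / Real.sqrt q := by
  have hs := aw_sqrt_pos hq0
  have hs1 : Real.sqrt q < 1 := by
    rw [show (1:ℝ) = Real.sqrt 1 by simp]
    exact Real.sqrt_lt_sqrt hq0.le hq1
  have h2 : 0 < 2 / Real.sqrt q := by positivity
  have ht2 : 2 < t := by linarith
  constructor
  · exact ht2
  constructor
  · have : 2 / Real.sqrt q < t := by linarith
    calc (2:ℝ) = Real.sqrt q * (2 / Real.sqrt q) := by field_simp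
    _ < Real.sqrt q * t := by exact mul_lt_mul_of_pos_left this hs
  · have : t < t / Real.sqrt q := by
      rw [lt_div_iff₀ hs]
      nlinarith
    linarith

lemma aw_cast_mul (hq0 : 0 < q) (t : ℝ) :
    awSqrt q * (t : ℂ) = ((Real.sqrt q * t : ℝ) : ℂ) := by
  simp [awSqrt]

lemma aw_cast_inv_mul (hq0 : 0 < q) (t : ℝ) :
    (awSqrt q)⁻¹ * (t : ℂ) = ((t / Real.sqrt q : ℝ) : ℂ) := by
  rw [Complex.ofReal_div, awSqrt, div_eq_inv_mul]

set_option maxHeartbeats 1600000 in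
lemma aw_stepS (hq0 : 0 < q) (hq1 : q < 1) (hD : IsAWDiff q D) (hS : IsAWAvg q S)
    (g : ℂ[X]) : D (S g) = awAlpha q • S (D g) + awU1 q * D (D g) := by
  have ha := aw_a_ne hq0
  have ha2 := aw_a_sq_ne_one hq0 hq1
  apply aw_ext hq0
  intro t ht
  obtain ⟨ht2, hat2, hit2⟩ := aw_good hq0 hq1 t ht
  obtain ⟨hz0, hz1, hzm⟩ := c_ne_of_two_lt t ht2
  have haz0 : awSqrt q * (t:ℂ) ≠ 0 := by rw [aw_cast_mul hq0]; exact (c_ne_of_two_lt _ hat2).1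
  have haz1 : awSqrt q * (t:ℂ) ≠ 1 := by rw [aw_cast_mul hq0]; exact (c_ne_of_two_lt _ hat2).2.1
  have hazm : awSqrt q * (t:ℂ) ≠ -1 := by rw [aw_cast_mul hq0]; exact (c_ne_of_two_lt _ hat2).2.2
  have hiz0 : (awSqrt q)⁻¹ * (t:ℂ) ≠ 0 := by rw [aw_cast_inv_mul hq0]; exact (c_ne_of_two_lt _ hit2).1
  have hiz1 : (awSqrt q)⁻¹ * (t:ℂ) ≠ 1 := by rw [aw_cast_inv_mul hq0]; exact (c_ne_of_two_lt _ hit2).2.1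
  have hizm : (awSqrt q)⁻¹ * (t:ℂ) ≠ -1 := by rw [aw_cast_inv_mul hq0]; exact (c_ne_of_two_lt _ hit2).2.2
  have hz2 : ((t:ℂ)) ^ 2 - 1 ≠ 0 := aw_ne_pm _ hz1 hzm
  have haz2 : (awSqrt q * (t:ℂ)) ^ 2 - 1 ≠ 0 := aw_ne_pm _ haz1 hazm
  have hiz2 : ((awSqrt q)⁻¹ * (t:ℂ)) ^ 2 - 1 ≠ 0 := aw_ne_pm _ hiz1 hizm
  have h2 : awSqrt q ^ 2 * (t:ℂ) ^ 2 - 1 ≠ 0 := by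
    intro h; apply haz2; linear_combination h
  have h3 : (t:ℂ) ^ 2 - awSqrt q ^ 2 ≠ 0 := by
    intro h; apply hiz2
    have : ((awSqrt q)⁻¹ * (t:ℂ)) ^ 2 - 1 = ((t:ℂ) ^ 2 - awSqrt q ^ 2) / awSqrt q ^ 2 := by
      field_simp
    rw [this, h, zero_div]
  rw [hD.eval' hq0 hq1 (S g) _ hz0 hz1 hzm,
    hS g _ haz0 haz1 hazm, hS g _ hiz0 hiz1 hizm,
    inv_mul_cancel_left₀ ha, mul_inv_cancel_left₀ ha]
  simp only [eval_add, eval_smul, eval_mul, smul_eq_mul, awU1, eval_C, eval_X]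
  rw [hS (D g) _ hz0 hz1 hzm,
    hD.eval' hq0 hq1 (D g) _ hz0 hz1 hzm,
    hD.eval_up hq0 hq1 g _ haz0 haz1 hazm,
    hD.eval_down hq0 hq1 g _ hiz0 hiz1 hizm]
  set a := awSqrt q with hadef
  set A := eval (awXmap (a * (a * (t:ℂ)))) g with hA
  set B := eval (awXmap (t:ℂ)) g with hB
  set Cc := eval (awXmap (a⁻¹ * (a⁻¹ * (t:ℂ)))) g with hC
  clear_value A B Cc
  simp only [awAlpha, awXmap]
  set E1 := (a ^ 2 - 1) * ((t:ℂ) ^ 2 - 1) with hE1d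
  set E2 := (a ^ 2 - 1) * (a ^ 2 * (t:ℂ) ^ 2 - 1) with hE2d
  set E3 := (a ^ 2 - 1) * ((t:ℂ) ^ 2 - a ^ 2) with hE3d
  have hE1 : E1 ≠ 0 := mul_ne_zero ha2 hz2
  have hE2 : E2 ≠ 0 := mul_ne_zero ha2 h2
  have hE3 : E3 ≠ 0 := mul_ne_zero ha2 h3
  clear_value E1 E2 E3
  field_simp
  rw [← hadef]
  field_simp
  rw [hE1d, hE2d, hE3d]
  ring

set_option maxHeartbeats 1600000 in
lemma aw_stepU (hq0 : 0 < q) (hq1 : q < 1) (hD : IsAWDiff q D) (hS : IsAWAvg q S)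
    (g : ℂ[X]) :
    D (awU1 q * g) = ((awAlpha q) ^ 2 - 1) • S g + awAlpha q • (awU1 q * D g) := by
  have ha := aw_a_ne hq0
  have ha2 := aw_a_sq_ne_one hq0 hq1
  apply aw_ext hq0
  intro t ht
  obtain ⟨ht2, hat2, hit2⟩ := aw_good hq0 hq1 t ht
  obtain ⟨hz0, hz1, hzm⟩ := c_ne_of_two_lt t ht2
  have hz2 : ((t:ℂ)) ^ 2 - 1 ≠ 0 := aw_ne_pm _ hz1 hzm
  rw [hD.eval' hq0 hq1 (awU1 q * g) _ hz0 hz1 hzm]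
  simp only [eval_add, eval_smul, eval_mul, smul_eq_mul, awU1, eval_C, eval_X]
  rw [hS g _ hz0 hz1 hzm, hD.eval' hq0 hq1 g _ hz0 hz1 hzm]
  set a := awSqrt q with hadef
  set P := eval (awXmap (a * (t:ℂ))) g with hP
  set Q := eval (awXmap (a⁻¹ * (t:ℂ))) g with hQ
  clear_value P Q
  clear_value a
  simp only [awAlpha, awXmap]
  rw [← hadef]
  set E1 := (a ^ 2 - 1) * ((t:ℂ) ^ 2 - 1) with hE1d
  have hE1 : E1 ≠ 0 := mul_ne_zero ha2 hz2
  clear_value E1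
  field_simp
  rw [hE1d]
  ring

lemma aw_D_lin (hq0 : 0 < q) (hq1 : q < 1) (hD : IsAWDiff q D) (c d : ℂ) (p r : ℂ[X]) :
    D (c • p + d • r) = c • D p + d • D r := by
  apply aw_ext hq0
  intro t ht
  obtain ⟨ht2, hat2, hit2⟩ := aw_good hq0 hq1 t ht
  obtain ⟨hz0, hz1, hzm⟩ := c_ne_of_two_lt t ht2
  rw [hD (c • p + d • r) _ hz0 hz1 hzm]
  simp only [eval_add, eval_smul, smul_eq_mul]
  rw [hD p _ hz0 hz1 hzm, hD r _ hz0 hz1 hzm]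
  ring

lemma aw_alpha_rec (hq0 : 0 < q) (hq1 : q < 1) (n : ℕ) :
    awAlphaN q (n + 1) = awAlpha q * awAlphaN q n + ((awAlpha q) ^ 2 - 1) * awGammaN q n := by
  have ha := aw_a_ne hq0
  have ha2 := aw_a_sq_ne_one hq0 hq1
  have hne : awSqrt q - (awSqrt q)⁻¹ ≠ 0 := by
    intro h
    apply ha2
    have := sub_eq_zero.mp h
    field_simp at this
    linear_combination this
  have hab : awSqrt q * (awSqrt q)⁻¹ = 1 := mul_inv_cancel₀ ha
  simp only [awAlphaN, awGammaN, awAlpha]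
  generalize hbd : (awSqrt q)⁻¹ = b at hne hab ⊢
  generalize awSqrt q = a at hne hab ⊢
  have hne' : a - b ≠ 0 := hne
  rw [show ((a + b) / 2) ^ 2 - 1 = ((a - b) / 2) ^ 2 by linear_combination hab]
  field_simp
  ring

lemma aw_gamma_rec (hq0 : 0 < q) (hq1 : q < 1) (n : ℕ) :
    awGammaN q (n + 1) = awAlphaN q n + awAlpha q * awGammaN q n := by
  have ha := aw_a_ne hq0
  have ha2 := aw_a_sq_ne_one hq0 hq1
  have hne : awSqrt q - (awSqrt q)⁻¹ ≠ 0 := by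
    intro h
    apply ha2
    have := sub_eq_zero.mp h
    field_simp at this
    linear_combination this
  simp only [awAlphaN, awGammaN, awAlpha]
  generalize hbd : (awSqrt q)⁻¹ = b at hne ⊢
  generalize awSqrt q = a at hne ⊢
  field_simp
  ring

end Main

/-- `𝒟_q^n(𝒮_q f) = α_n·𝒮_q(𝒟_q^n f) + γ_n·U₁·𝒟_q^{n+1} f`. -/
theorem stmt_2 (q : ℝ) (hq0 : 0 < q) (hq1 : q < 1)
    (D S : ℂ[X] → ℂ[X]) (hD : IsAWDiff q D) (hS : IsAWAvg q S) (n : ℕ) (f : ℂ[X]) :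
    D^[n] (S f) = awAlphaN q n • S (D^[n] f) + awGammaN q n • (awU1 q * D^[n + 1] f) := by
  induction n with
  | zero =>
    simp [awAlphaN, awGammaN]
  | succ n ih =>
    rw [Function.iterate_succ_apply', ih, aw_D_lin hq0 hq1 hD,
      aw_stepS hq0 hq1 hD hS, aw_stepU hq0 hq1 hD hS]
    rw [show D (D^[n] f) = D^[n+1] f from (Function.iterate_succ_apply' D n f).symm,
      show D (D^[n+1] f) = D^[n+1+1] f from (Function.iterate_succ_apply' D (n+1) f).symm]
    rw [aw_alpha_rec hq0 hq1 n, aw_gamma_rec hq0 hq1 n]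
    simp only [smul_add, smul_smul, Polynomial.smul_eq_C_mul, map_add, map_mul, map_sub,
      map_one, map_pow]
    ring
end

section
/- For every real q with 0<q<1, every polynomial f∈ℂ[x] and every linear functional u on ℂ[x], one has f·𝐃_q u = 𝐃_q(𝒮_q f · u) − 𝐒_q(𝒟_q f · u), i.e. for every polynomial g: −⟨u, 𝒟_q(fg)⟩ = −⟨u, (𝒮_q f)·(𝒟_q g)⟩ − ⟨u, (𝒟_q f)·(𝒮_q g)⟩. -/
open Polynomial

/-- Every `x ≠ ±1` is `awXmap z` for some admissible `z`. -/
lemma awXmap_surj (x : ℂ) (h1 : x ≠ 1) (h2 : x ≠ -1) :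
    ∃ z : ℂ, z ≠ 0 ∧ z ≠ 1 ∧ z ≠ -1 ∧ awXmap z = x := by
  obtain ⟨z, hz⟩ := Complex.exists_root (f := C 1 * X ^ 2 + C (-(2*x)) * X + C 1)
    (by rw [Polynomial.degree_quadratic one_ne_zero]; norm_num)
  have hz' : z ^ 2 - 2 * x * z + 1 = 0 := by
    have := hz; simp [Polynomial.IsRoot, Polynomial.eval_add, Polynomial.eval_mul] at this
    linear_combination this
  have hz0 : z ≠ 0 := by
    rintro rfl; simp at hz'
  refine ⟨z, hz0, ?_, ?_, ?_⟩
  · rintro rfl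
    apply h1; linear_combination -hz'/2
  · rintro rfl
    apply h2; linear_combination hz'/2
  · unfold awXmap
    field_simp
    linear_combination hz'

lemma aw_scalar_identity (fa fb ga gb d : ℂ) :
    (fa * ga - fb * gb) / d =
      (fa + fb) / 2 * ((ga - gb) / d) + (fa - fb) / d * ((ga + gb) / 2) := by
  simp only [div_eq_mul_inv]
  ring

/-- The polynomial identity `𝒟_q (f g) = 𝒮_q f · 𝒟_q g + 𝒟_q f · 𝒮_q g`. -/
lemma aw_leibniz (q : ℝ) (D S : ℂ[X] → ℂ[X]) (hD : IsAWDiff q D) (hS : IsAWAvg q S)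
    (f g : ℂ[X]) : D (f * g) = S f * D g + D f * S g := by
  have key : ∀ x : ℂ, x ≠ 1 → x ≠ -1 →
      (D (f * g) - (S f * D g + D f * S g)).eval x = 0 := by
    intro x h1 h2
    obtain ⟨z, hz0, hz1, hz2, rfl⟩ := awXmap_surj x h1 h2
    have e1 := hD (f * g) z hz0 hz1 hz2
    have e2 := hD f z hz0 hz1 hz2
    have e3 := hD g z hz0 hz1 hz2
    have e4 := hS f z hz0 hz1 hz2
    have e5 := hS g z hz0 hz1 hz2
    simp only [Polynomial.eval_sub, Polynomial.eval_add, Polynomial.eval_mul,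
      e1, e2, e3, e4, e5]
    rw [sub_eq_zero]
    exact aw_scalar_identity _ _ _ _ _
  have : D (f * g) - (S f * D g + D f * S g) = 0 := by
    apply Polynomial.eq_zero_of_infinite_isRoot
    have hinf : ({1, -1}ᶜ : Set ℂ).Infinite :=
      (Set.toFinite ({1, -1} : Set ℂ)).infinite_compl
    refine hinf.mono fun x hx => ?_
    simp only [Set.mem_compl_iff, Set.mem_insert_iff, Set.mem_singleton_iff, not_or] at hx
    exact key x hx.1 hx.2
  linear_combination this

/-- `f·𝐃_q u = 𝐃_q(𝒮_q f · u) − 𝐒_q(𝒟_q f · u)`, i.e. for every `g`,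
`−⟨u, 𝒟_q(fg)⟩ = −⟨u, (𝒮_q f)·(𝒟_q g)⟩ − ⟨u, (𝒟_q f)·(𝒮_q g)⟩`. -/
theorem stmt_3 (q : ℝ) (hq0 : 0 < q) (hq1 : q < 1)
    (D S : ℂ[X] → ℂ[X]) (hD : IsAWDiff q D) (hS : IsAWAvg q S)
    (f : ℂ[X]) (u : ℂ[X] →ₗ[ℂ] ℂ) :
    ∀ g : ℂ[X], -(u (D (f * g))) = -(u (S f * D g)) - u (D f * S g) := by
  intro g
  rw [aw_leibniz q D S hD hS f g, map_add]
  ring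
end

section
/- Fix a real q with 0<q<1. Let u be a linear functional on ℂ[x] and (P_n)_{n≥0} a sequence of monic polynomials with deg P_n = n, ⟨u, P_n P_m⟩ = 0 for n≠m and ⟨u, P_n²⟩ ≠ 0 for all n, with dual basis (a_n). For k≥0 define the monic polynomials P_n^{[k]} = (γ_n!/γ_{n+k}!)·𝒟_q^k P_{n+k} (where γ_0!=1 and γ_{n+1}! = γ_1·γ_2⋯γ_{n+1}), and let (a_n^{[k]})_{n≥0} be the dual basis of the simple set (P_n^{[k]})_{n≥0}. Then for all k,n≥0: 𝐃_q^k a_n^{[k]} = (−1)^k (γ_{n+k}!/γ_n!) · a_{n+k}, i.e. for every polynomial f, (−1)^k ⟨a_n^{[k]}, 𝒟_q^k f⟩ = (−1)^k (γ_{n+k}!/γ_n!) ⟨a_{n+k}, f⟩. -/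
open Polynomial

noncomputable section AWProof
open Polynomial

private def chebT : ℕ → ℂ[X]
  | 0 => 1
  | 1 => X
  | (n+2) => 2 * X * chebT (n+1) - chebT n

private def chebU : ℕ → ℂ[X]
  | 0 => 1
  | 1 => 2 * X
  | (n+2) => 2 * X * chebU (n+1) - chebU n

private lemma zm_ne_zero (m : ℕ) : ((m : ℂ) + 2) ≠ 0 := by
  have h : ((m : ℂ) + 2) = ((m + 2 : ℕ) : ℂ) := by push_cast; ring
  rw [h]
  exact_mod_cast Nat.succ_ne_zero (m+1)

private lemma zm_ne_one (m : ℕ) : ((m : ℂ) + 2) ≠ 1 := by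
  intro h
  have h2 : ((m + 2 : ℕ) : ℂ) = ((1 : ℕ) : ℂ) := by push_cast; linear_combination h
  have := Nat.cast_inj (R := ℂ) |>.mp h2
  omega

private lemma zm_ne_negone (m : ℕ) : ((m : ℂ) + 2) ≠ -1 := by
  intro h
  have h2 : ((m + 3 : ℕ) : ℂ) = ((0 : ℕ) : ℂ) := by push_cast; linear_combination h
  have := Nat.cast_inj (R := ℂ) |>.mp h2
  omega

private lemma zm_sub_inv_ne_zero (m : ℕ) : ((m : ℂ) + 2) - ((m : ℂ) + 2)⁻¹ ≠ 0 := by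
  have hz := zm_ne_zero m
  intro h
  rw [sub_eq_zero] at h
  have h2 : ((m : ℂ) + 2) * ((m : ℂ) + 2) = 1 := by
    field_simp at h
    linear_combination h
  have h3 : (((m+2) * (m+2) : ℕ) : ℂ) = ((1:ℕ) : ℂ) := by push_cast; linear_combination h2
  have := Nat.cast_inj (R := ℂ) |>.mp h3
  nlinarith [this]

private lemma phi_inj : Function.Injective (fun m : ℕ => awXmap ((m : ℂ) + 2)) := by
  intro a b hab
  simp only [awXmap] at hab
  have ha := zm_ne_zero a
  have hb := zm_ne_zero b
  field_simp at hab
  have key : (((a:ℂ)+2) - ((b:ℂ)+2)) * (((a:ℂ)+2) * ((b:ℂ)+2) - 1) = 0 := by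
    linear_combination hab
  rcases mul_eq_zero.mp key with h | h
  · have h2 : ((a:ℕ) : ℂ) = ((b:ℕ) : ℂ) := by linear_combination h
    exact Nat.cast_inj (R := ℂ) |>.mp h2
  · exfalso
    have h3 : (((a+2)*(b+2) : ℕ) : ℂ) = ((1:ℕ):ℂ) := by push_cast; linear_combination h
    have := Nat.cast_inj (R := ℂ) |>.mp h3
    nlinarith [this]

/-- Two polynomials agreeing at all points `awXmap (m+2)` are equal. -/
private lemma polyext {p r : ℂ[X]} 
    (h : ∀ m : ℕ, p.eval (awXmap ((m:ℂ)+2)) = r.eval (awXmap ((m:ℂ)+2))) : p = r := by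
  apply Polynomial.eq_of_infinite_eval_eq
  exact Set.infinite_of_injective_forall_mem (f := fun m : ℕ => awXmap ((m : ℂ) + 2)) phi_inj
    (fun m => h m)
private lemma awSqrt_ne_zero {q : ℝ} (hq0 : 0 < q) : awSqrt q ≠ 0 := by
  simp only [awSqrt, ne_eq, Complex.ofReal_eq_zero]
  exact (Real.sqrt_pos.mpr hq0).ne'

private lemma awSqrt_pow_lt_one {q : ℝ} (hq0 : 0 < q) (hq1 : q < 1)
    (n : ℕ) (hn : 1 ≤ n) : Real.sqrt q ^ n < 1 := by
  have h0 : 0 ≤ Real.sqrt q := Real.sqrt_nonneg q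
  have h1 : Real.sqrt q < 1 := by
    rw [show (1:ℝ) = Real.sqrt 1 from (Real.sqrt_one).symm]
    exact Real.sqrt_lt_sqrt hq0.le hq1
  calc Real.sqrt q ^ n ≤ Real.sqrt q ^ 1 := pow_le_pow_of_le_one h0 h1.le hn
    _ < 1 := by simpa using h1

private lemma awSqrt_pow_sub_inv_ne_zero {q : ℝ} (hq0 : 0 < q) (hq1 : q < 1) (n : ℕ) (hn : 1 ≤ n) :
    (awSqrt q) ^ n - (awSqrt q)⁻¹ ^ n ≠ 0 := by
  have hs := awSqrt_ne_zero (q := q) hq0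
  intro h
  rw [sub_eq_zero] at h
  have h2 : (awSqrt q)⁻¹ ^ n * (awSqrt q) ^ n = 1 := by
    rw [← mul_pow, inv_mul_cancel₀ hs, one_pow]
  rw [← h] at h2
  have h3 : (Real.sqrt q ^ n * Real.sqrt q ^ n : ℝ) = 1 := by
    have : ((Real.sqrt q ^ n * Real.sqrt q ^ n : ℝ) : ℂ) = 1 := by
      push_cast; simpa [awSqrt] using h2
    exact_mod_cast this
  have := awSqrt_pow_lt_one hq0 hq1 n hn
  nlinarith [this, pow_nonneg (Real.sqrt_nonneg q) n]

private lemma awSqrt_sub_inv_ne_zero {q : ℝ} (hq0 : 0 < q) (hq1 : q < 1) :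
    awSqrt q - (awSqrt q)⁻¹ ≠ 0 := by
  have := awSqrt_pow_sub_inv_ne_zero hq0 hq1 1 le_rfl
  simpa using this

private lemma awGammaN_ne_zero {q : ℝ} (hq0 : 0 < q) (hq1 : q < 1) (n : ℕ) (hn : 1 ≤ n) :
    awGammaN q n ≠ 0 :=
  div_ne_zero (awSqrt_pow_sub_inv_ne_zero hq0 hq1 n hn) (awSqrt_sub_inv_ne_zero hq0 hq1)

private lemma awGammaFact_ne_zero {q : ℝ} (hq0 : 0 < q) (hq1 : q < 1) (n : ℕ) :
    awGammaFact q n ≠ 0 := by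
  apply Finset.prod_ne_zero_iff.mpr
  intro j _
  exact awGammaN_ne_zero hq0 hq1 (j+1) (Nat.le_add_left 1 j)
private lemma chebT_eval : ∀ (n : ℕ) {z : ℂ}, z ≠ 0 →
    (chebT n).eval (awXmap z) * 2 = z ^ n + z⁻¹ ^ n
  | 0, z, hz => by norm_num [chebT]
  | 1, z, hz => by
    simp only [chebT, eval_X, awXmap]
    field_simp
  | (n+2), z, hz => by
    have h1 := chebT_eval (n+1) hz
    have h0 := chebT_eval n hz
    have hzw : z * z⁻¹ = 1 := mul_inv_cancel₀ hz
    simp only [awXmap] at h1 h0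
    simp only [chebT, eval_sub, eval_mul, eval_ofNat, eval_X, awXmap]
    linear_combination (z + z⁻¹) * h1 - h0 + (z ^ n + z⁻¹ ^ n) * hzw

private lemma chebU_eval : ∀ (n : ℕ) {z : ℂ}, z ≠ 0 →
    (chebU n).eval (awXmap z) * (z - z⁻¹) = z ^ (n+1) - z⁻¹ ^ (n+1)
  | 0, z, hz => by simp [chebU]
  | 1, z, hz => by
    have hzw : z * z⁻¹ = 1 := mul_inv_cancel₀ hz
    simp only [chebU, eval_mul, eval_ofNat, eval_X, awXmap]
    ring
  | (n+2), z, hz => by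
    have h1 := chebU_eval (n+1) hz
    have h0 := chebU_eval n hz
    have hzw : z * z⁻¹ = 1 := mul_inv_cancel₀ hz
    simp only [awXmap] at h1 h0
    simp only [chebU, eval_sub, eval_mul, eval_ofNat, eval_X, awXmap]
    linear_combination (z + z⁻¹) * h1 - h0 + (z ^ (n+1) - z⁻¹ ^ (n+1)) * hzw
private lemma chebT_deg : ∀ n : ℕ, (chebT (n+1)).natDegree = n+1 ∧ (chebT (n+1)).coeff (n+1) = 2^n
  | 0 => by simp [chebT]
  | 1 => by
    constructor
    · rw [show chebT 2 = 2*X*X - 1 from rfl]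
      compute_degree!
    · rw [show chebT 2 = 2*X*X - 1 from rfl]
      simp [coeff_one]
  | (n+2) => by
    obtain ⟨hd1, hc1⟩ := chebT_deg (n+1)
    obtain ⟨hd0, hc0⟩ := chebT_deg n
    have hle : (2 * X * chebT (n+2)).natDegree ≤ n+3 := by
      calc (2 * X * chebT (n+2)).natDegree ≤ (2*X : ℂ[X]).natDegree + (chebT (n+2)).natDegree :=
            natDegree_mul_le
        _ ≤ 1 + (n+2) := by
            gcongr
            · exact natDegree_mul_le.trans (by simp)
            · exact hd1.le
        _ = n + 3 := by ring
    have hle2 : (chebT (n+3)).natDegree ≤ n+3 := by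
      rw [show chebT (n+3) = 2 * X * chebT (n+2) - chebT (n+1) from rfl]
      exact (natDegree_sub_le _ _).trans (by simp [hle, hd0])
    have hcoeff : (chebT (n+3)).coeff (n+3) = 2^(n+2) := by
      rw [show chebT (n+3) = 2 * X * chebT (n+2) - chebT (n+1) from rfl]
      rw [coeff_sub, mul_assoc, show (2 : ℂ[X]) = C 2 from by rw [show (2:ℂ) = ((2:ℕ):ℂ) by norm_num, map_natCast]; norm_num, coeff_C_mul,
        coeff_X_mul, hc1, coeff_eq_zero_of_natDegree_lt (by omega : (chebT (n+1)).natDegree < n+3)]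
      ring
    refine ⟨natDegree_eq_of_le_of_coeff_ne_zero hle2 ?_, hcoeff⟩
    rw [hcoeff]
    exact pow_ne_zero _ two_ne_zero

private lemma chebU_deg_le : ∀ n : ℕ, (chebU n).natDegree ≤ n
  | 0 => by simp [chebU]
  | 1 => by
    rw [show chebU 1 = 2*X from rfl]
    exact natDegree_mul_le.trans (by simp)
  | (n+2) => by
    have h1 := chebU_deg_le (n+1)
    have h0 := chebU_deg_le n
    rw [show chebU (n+2) = 2 * X * chebU (n+1) - chebU n from rfl]
    refine (natDegree_sub_le _ _).trans ?_
    have : (2 * X * chebU (n+1)).natDegree ≤ n+2 := by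
      calc (2 * X * chebU (n+1)).natDegree ≤ (2*X : ℂ[X]).natDegree + (chebU (n+1)).natDegree :=
            natDegree_mul_le
        _ ≤ 1 + (n+1) := by
            gcongr
            exact natDegree_mul_le.trans (by simp)
        _ = n + 2 := by ring
    simp [this, h0]
    omega
section Dprops
variable {q : ℝ} {D : ℂ[X] → ℂ[X]}

private lemma D_add (hD : IsAWDiff q D) (f g : ℂ[X]) : D (f + g) = D f + D g := by
  apply polyext; intro m
  have h1 := hD f ((m:ℂ)+2) (zm_ne_zero m) (zm_ne_one m) (zm_ne_negone m)
  have h2 := hD g ((m:ℂ)+2) (zm_ne_zero m) (zm_ne_one m) (zm_ne_negone m)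
  have h3 := hD (f+g) ((m:ℂ)+2) (zm_ne_zero m) (zm_ne_one m) (zm_ne_negone m)
  rw [eval_add, h1, h2, h3, eval_add, eval_add]
  ring

private lemma D_smul (hD : IsAWDiff q D) (c : ℂ) (f : ℂ[X]) : D (c • f) = c • D f := by
  apply polyext; intro m
  have h1 := hD f ((m:ℂ)+2) (zm_ne_zero m) (zm_ne_one m) (zm_ne_negone m)
  have h3 := hD (c • f) ((m:ℂ)+2) (zm_ne_zero m) (zm_ne_one m) (zm_ne_negone m)
  rw [eval_smul, h1, h3, eval_smul, eval_smul, smul_eq_mul, smul_eq_mul, smul_eq_mul]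
  ring

private lemma D_one (hD : IsAWDiff q D) : D 1 = 0 := by
  apply polyext; intro m
  have h3 := hD 1 ((m:ℂ)+2) (zm_ne_zero m) (zm_ne_one m) (zm_ne_negone m)
  rw [h3]
  simp

private lemma D_zero (hD : IsAWDiff q D) : D 0 = 0 := by
  have := D_smul hD 0 0
  simpa using this

private lemma D_chebT (hq0 : 0 < q) (hq1 : q < 1) (hD : IsAWDiff q D) (n : ℕ) :
    D (chebT (n+1)) = C (awGammaN q (n+1)) * chebU n := by
  have key : ∀ z : ℂ, z ≠ 0 → z ≠ 1 → z ≠ -1 → z - z⁻¹ ≠ 0 →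
      eval (awXmap z) (D (chebT (n+1))) = eval (awXmap z) (C (awGammaN q (n+1)) * chebU n) := by
    intro z hz0 hz1 hzn1 hzw
    set s := awSqrt q with hs
    have hs0 : s ≠ 0 := awSqrt_ne_zero hq0
    have hst : s - s⁻¹ ≠ 0 := awSqrt_sub_inv_ne_zero hq0 hq1
    have hsz : s * z ≠ 0 := mul_ne_zero hs0 hz0
    have htz : s⁻¹ * z ≠ 0 := mul_ne_zero (inv_ne_zero hs0) hz0
    have hDe := hD (chebT (n+1)) z hz0 hz1 hzn1
    have hT1 := chebT_eval (n+1) hsz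
    have hT2 := chebT_eval (n+1) htz
    have hU := chebU_eval n hz0
    have hG : awGammaN q (n+1) * (s - s⁻¹) = s^(n+1) - s⁻¹^(n+1) := by
      rw [awGammaN, div_mul_cancel₀ _ hst]
    have hden_eq : awXmap (s*z) - awXmap (s⁻¹*z) = (s - s⁻¹) * (z - z⁻¹) / 2 := by
      simp only [awXmap]
      field_simp
      ring
    have hden_ne : awXmap (s*z) - awXmap (s⁻¹*z) ≠ 0 := by
      rw [hden_eq]; exact div_ne_zero (mul_ne_zero hst hzw) two_ne_zero
    rw [hDe, eval_mul, eval_C, div_eq_iff hden_ne, hden_eq]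
    simp only [mul_inv, inv_inv] at hT1 hT2
    linear_combination hT1/2 - hT2/2 - (awGammaN q (n+1) * (s - s⁻¹)/2) * hU
      - ((z^(n+1) - z⁻¹^(n+1))/2) * hG
  exact polyext fun m => key _ (zm_ne_zero m) (zm_ne_one m) (zm_ne_negone m) (zm_sub_inv_ne_zero m)

end Dprops
section Ddeg
variable {q : ℝ} {D : ℂ[X] → ℂ[X]}

private lemma D_deg (hq0 : 0 < q) (hq1 : q < 1) (hD : IsAWDiff q D) :
    ∀ (d : ℕ) (f : ℂ[X]), f.natDegree ≤ d → (D f = 0 ∧ d = 0) ∨ (D f).natDegree < d := by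
  intro d
  induction d with
  | zero =>
    intro f hf
    left
    refine ⟨?_, rfl⟩
    have hf1 : f = (f.coeff 0) • (1 : ℂ[X]) := by
      rw [smul_eq_C_mul, mul_one]
      exact (Polynomial.eq_C_of_natDegree_le_zero hf)
    rw [hf1, D_smul hD, D_one hD, smul_zero]
  | succ d ih =>
    intro f hf
    right
    set c : ℂ := f.coeff (d+1) / 2^d with hc
    set g : ℂ[X] := f - c • chebT (d+1) with hg
    have hTdeg := chebT_deg d
    have hgdeg : g.natDegree ≤ d := by
      apply natDegree_le_iff_coeff_eq_zero.mpr
      intro N hN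
      rcases Nat.lt_or_ge (d+1) N with h | h
      · rw [hg, coeff_sub, coeff_smul, natDegree_le_iff_coeff_eq_zero.mp hf N h,
          coeff_eq_zero_of_natDegree_lt (by omega : (chebT (d+1)).natDegree < N)]
        simp
      · have hNd : N = d + 1 := by omega
        rw [hg, coeff_sub, coeff_smul, hNd, hTdeg.2, hc]
        rw [smul_eq_mul, div_mul_cancel₀ _ (pow_ne_zero _ two_ne_zero), sub_self]
    have hfeq : f = g + c • chebT (d+1) := by rw [hg]; ring
    have hDf : D f = D g + (c * awGammaN q (d+1)) • chebU d := by
      rw [hfeq, D_add hD, D_smul hD, D_chebT hq0 hq1 hD d, smul_eq_C_mul, smul_eq_C_mul]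
      rw [map_mul]
      ring
    have h1 : (D g).natDegree ≤ d := by
      rcases ih g hgdeg with ⟨h, _⟩ | h
      · simp [h]
      · omega
    have h2 : ((c * awGammaN q (d+1)) • chebU d).natDegree ≤ d :=
      (natDegree_smul_le _ _).trans (chebU_deg_le d)
    calc (D f).natDegree ≤ max (D g).natDegree ((c * awGammaN q (d+1)) • chebU d).natDegree := by
          rw [hDf]; exact natDegree_add_le _ _
      _ ≤ d := by omega
      _ < d + 1 := by omega

private lemma D_iter_zero_poly (hD : IsAWDiff q D) : ∀ k, D^[k] (0 : ℂ[X]) = 0 := by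
  intro k
  induction k with
  | zero => simp
  | succ k ih => rw [Function.iterate_succ_apply, D_zero hD]; exact ih

private lemma D_iter_zero (hq0 : 0 < q) (hq1 : q < 1) (hD : IsAWDiff q D) :
    ∀ (k : ℕ) (f : ℂ[X]), f.natDegree < k → D^[k] f = 0 := by
  intro k
  induction k with
  | zero => intro f hf; omega
  | succ k ih =>
    intro f hf
    rw [Function.iterate_succ_apply]
    rcases D_deg hq0 hq1 hD f.natDegree f le_rfl with ⟨h, _⟩ | h
    · rw [h]
      exact D_iter_zero_poly hD k
    · exact ih _ (by omega)

private lemma D_iter_add (hD : IsAWDiff q D) (k : ℕ) (f g : ℂ[X]) :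
    D^[k] (f + g) = D^[k] f + D^[k] g := by
  induction k generalizing f g with
  | zero => simp
  | succ k ih => rw [Function.iterate_succ_apply, Function.iterate_succ_apply,
      Function.iterate_succ_apply, D_add hD, ih]

private lemma D_iter_smul (hD : IsAWDiff q D) (k : ℕ) (c : ℂ) (f : ℂ[X]) :
    D^[k] (c • f) = c • D^[k] f := by
  induction k generalizing f with
  | zero => simp
  | succ k ih => rw [Function.iterate_succ_apply, Function.iterate_succ_apply,
      D_smul hD, ih]

end Ddeg

end AWProof

/-- `𝐃_q^k a_n^{[k]} = (−1)^k (γ_{n+k}!/γ_n!)·a_{n+k}`, i.e. for every `f`,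
`(−1)^k ⟨a_n^{[k]}, 𝒟_q^k f⟩ = (−1)^k (γ_{n+k}!/γ_n!) ⟨a_{n+k}, f⟩`. -/
theorem stmt_8 (q : ℝ) (hq0 : 0 < q) (hq1 : q < 1)
    (D : ℂ[X] → ℂ[X]) (hD : IsAWDiff q D)
    (u : ℂ[X] →ₗ[ℂ] ℂ) (P : ℕ → ℂ[X])
    (hmonic : ∀ n, (P n).Monic) (hdeg : ∀ n, (P n).natDegree = n)
    (horth : ∀ n m, n ≠ m → u (P n * P m) = 0)
    (hreg : ∀ n, u (P n * P n) ≠ 0)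
    (a : ℕ → (ℂ[X] →ₗ[ℂ] ℂ))
    (ha : ∀ n m, a n (P m) = if n = m then 1 else 0)
    (ak : ℕ → ℕ → (ℂ[X] →ₗ[ℂ] ℂ))
    (hak : ∀ k n m, ak k n
        ((awGammaFact q m / awGammaFact q (m + k)) • D^[k] (P (m + k))) =
      if n = m then 1 else 0) :
    ∀ (k n : ℕ) (f : ℂ[X]),
      (-1 : ℂ) ^ k * ak k n (D^[k] f) =
        (-1 : ℂ) ^ k * (awGammaFact q (n + k) / awGammaFact q n) * a (n + k) f := by
  intro k n f
  have hΓ : ∀ j, awGammaFact q j ≠ 0 := awGammaFact_ne_zero hq0 hq1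
  suffices h : ak k n (D^[k] f) = awGammaFact q (n + k) / awGammaFact q n * a (n + k) f by
    rw [h]; ring
  have Hp : ∀ m, ak k n (D^[k] (P m)) =
      (awGammaFact q (n+k) / awGammaFact q n) * a (n+k) (P m) := by
    intro m
    rcases Nat.lt_or_ge m k with hm | hm
    · rw [D_iter_zero hq0 hq1 hD k (P m) (by rw [hdeg]; omega), ha, map_zero,
        if_neg (by omega)]
      ring
    · obtain ⟨m', rfl⟩ : ∃ m', m = m' + k := ⟨m - k, by omega⟩
      have h1 := hak k n m'
      rw [map_smul, smul_eq_mul] at h1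
      have h2 : ak k n (D^[k] (P (m' + k))) =
          (awGammaFact q (m'+k) / awGammaFact q m') * (if n = m' then 1 else 0) := by
        have hcan : awGammaFact q (m'+k) / awGammaFact q m' *
            (awGammaFact q m' / awGammaFact q (m'+k)) = 1 := by
          field_simp [hΓ m', hΓ (m'+k)]
        rw [← h1, ← mul_assoc, hcan, one_mul]
      rw [h2, ha, show (if n + k = m' + k then (1:ℂ) else 0) = (if n = m' then 1 else 0) by
        simp [Nat.add_right_cancel_iff]]
      by_cases hnm : n = m'
      · subst hnm; simp
      · simp [hnm]
  have main : ∀ (d : ℕ) (g : ℂ[X]), g.natDegree ≤ d →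
      ak k n (D^[k] g) = awGammaFact q (n + k) / awGammaFact q n * a (n + k) g := by
    intro d
    induction d with
    | zero =>
      intro g hg
      have hP0 : P 0 = 1 := ((hmonic 0).natDegree_eq_zero).mp (hdeg 0)
      have hg1 : g = g.coeff 0 • P 0 := by
        rw [hP0, smul_eq_C_mul, mul_one]
        exact eq_C_of_natDegree_le_zero hg
      rw [hg1, D_iter_smul hD, map_smul, map_smul, smul_eq_mul, smul_eq_mul, Hp 0]
      ring
    | succ d ih =>
      intro g hg
      set c : ℂ := g.coeff (d+1) with hc
      set g' : ℂ[X] := g - c • P (d+1) with hg'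
      have hPc : (P (d+1)).coeff (d+1) = 1 := by
        have := (hmonic (d+1)).coeff_natDegree
        rwa [hdeg (d+1)] at this
      have hg'deg : g'.natDegree ≤ d := by
        apply natDegree_le_iff_coeff_eq_zero.mpr
        intro N hN
        rcases Nat.lt_or_ge (d+1) N with h | h
        · rw [hg', coeff_sub, coeff_smul, natDegree_le_iff_coeff_eq_zero.mp hg N h,
            coeff_eq_zero_of_natDegree_lt (by rw [hdeg]; omega : (P (d+1)).natDegree < N)]
          simp
        · have hNd : N = d + 1 := by omega
          rw [hg', coeff_sub, coeff_smul, hNd, hPc]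
          simp [hc]
      have hgeq : g = g' + c • P (d+1) := by rw [hg']; ring
      rw [hgeq, D_iter_add hD, D_iter_smul hD, map_add, map_add, map_smul, map_smul,
        smul_eq_mul, smul_eq_mul, ih g' hg'deg, Hp (d+1)]
      ring
  exact main f.natDegree f le_rfl
end

section
/- Fix a real q with 0<q<1. Let (P_n)_{n≥0} be a monic OPS with recurrence coefficients B_n and C_n (C_n≠0). Then for every n≥1, one has the identity of polynomials 2(α²U₂ − U₁²)·𝒟_q(𝒟_q P_n) + (4α²−3)·x·𝒟_q(𝒮_q P_n) + α·P_n = 𝒟_q(𝒮_q P_{n+1}) + B_n·𝒟_q(𝒮_q P_n) + C_n·𝒟_q(𝒮_q P_{n−1}). -/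
open Polynomial

section Aux

open Polynomial

/-- Two complex polynomials agreeing on `awXmap t` for all large real `t`
(except possibly one value) are equal. -/
lemma aw_eval_ext (c : ℝ) (F G : ℂ[X])
    (h : ∀ t : ℝ, 2 < t → t ≠ c → F.eval (awXmap t) = G.eval (awXmap t)) :
    F = G := by
  rw [← sub_eq_zero]
  by_contra hne
  have hfin : {x : ℂ | (F - G).IsRoot x}.Finite := Polynomial.finite_setOf_isRoot hne
  have hmono : StrictMonoOn (fun t : ℝ => (t + t⁻¹)/2) (Set.Ioi 2) := by
    intro t ht u hu htu
    have ht2 : (2:ℝ) < t := ht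
    have hu2 : (2:ℝ) < u := hu
    have ht0 : t ≠ 0 := by linarith
    have hu0 : u ≠ 0 := by linarith
    have h1 : t * t⁻¹ = 1 := mul_inv_cancel₀ ht0
    have h2 : u * u⁻¹ = 1 := mul_inv_cancel₀ hu0
    have h3 : (0:ℝ) < t⁻¹ := by positivity
    have h4 : (0:ℝ) < u⁻¹ := by positivity
    have h5 : t⁻¹ - u⁻¹ = (u - t) * (t⁻¹ * u⁻¹) := by field_simp
    have h6 : t⁻¹ < 1/2 := by nlinarith
    have h7 : u⁻¹ < 1/2 := by nlinarith
    have h8 : t⁻¹ * u⁻¹ < 1 := by nlinarith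
    show (t + t⁻¹)/2 < (u + u⁻¹)/2
    nlinarith [mul_pos (mul_pos h3 h4) (sub_pos.mpr htu),
      mul_lt_of_lt_one_right (sub_pos.mpr htu) h8]
  have hinjR : Set.InjOn (fun t : ℝ => (t + t⁻¹)/2) (Set.Ioi 2 \ {c}) :=
    (hmono.injOn).mono Set.diff_subset
  have hinj : Set.InjOn (fun t : ℝ => awXmap (t : ℂ)) (Set.Ioi 2 \ {c}) := by
    intro t ht u hu he
    apply hinjR ht hu
    have he' : awXmap (t : ℂ) = awXmap (u : ℂ) := he
    simp only [awXmap] at he'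
    have : (((t + t⁻¹)/2 : ℝ) : ℂ) = (((u + u⁻¹)/2 : ℝ) : ℂ) := by push_cast; exact he'
    exact_mod_cast this
  have hinf : Set.Infinite ((fun t : ℝ => awXmap (t : ℂ)) '' (Set.Ioi 2 \ {c})) := by
    apply Set.Infinite.image hinj
    exact (Set.Ioi_infinite 2).diff (Set.finite_singleton c)
  apply hinf
  apply hfin.subset
  rintro w ⟨t, ⟨ht2, htc⟩, rfl⟩
  have := h t ht2 (by simpa using htc)
  simp only [Set.mem_setOf_eq, IsRoot, eval_sub]
  rw [this]; ring

lemma aw_sq_ne_one {w : ℂ} (h1 : w ≠ 1) (h2 : w ≠ -1) : w ^ 2 ≠ 1 := by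
  intro h
  rcases mul_eq_zero.mp (show (w - 1) * (w + 1) = 0 by linear_combination h) with h' | h'
  · exact h1 (by linear_combination h')
  · exact h2 (by linear_combination h')

lemma aw_sub_inv_ne {w : ℂ} (h0 : w ≠ 0) (h2 : w ^ 2 ≠ 1) : w - w⁻¹ ≠ 0 := by
  intro h
  apply h2
  have hw : w = w⁻¹ := sub_eq_zero.mp h
  calc w ^ 2 = w * w := sq w
    _ = w * w⁻¹ := by rw [← hw]
    _ = 1 := mul_inv_cancel₀ h0

lemma aw_denom_eq (s w : ℂ) (hs0 : s ≠ 0) (hw0 : w ≠ 0) :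
    awXmap (s * w) - awXmap (s⁻¹ * w) = (s - s⁻¹) * (w - w⁻¹) / 2 := by
  unfold awXmap
  field_simp
  ring

set_option maxHeartbeats 2000000 in
lemma aw_core_s13 (s z a1 a2 a3 b1 b2 b3 Bn Cn : ℂ)
    (hs0 : s ≠ 0) (hz0 : z ≠ 0)
    (hs2' : s ^ 2 - 1 ≠ 0) (hz2' : z ^ 2 - 1 ≠ 0)
    (hszsq : s ^ 2 * z ^ 2 - 1 ≠ 0) (hzs : z ^ 2 - s ^ 2 ≠ 0) :
    2 * (((s^2+1)/(2*s))^2 * ((((s^2+1)/(2*s))^2 - 1) * (((z^2+1)/(2*z))^2 - 1)) -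
        ((((s^2+1)/(2*s))^2 - 1) * ((z^2+1)/(2*z)))^2) *
      (((a1 - a2) * (z^2 - s^2) - (a2 - a3) * (s^2*z^2 - 1)) * (4*s^3*z^2) /
        ((s^2-1)^2 * (z^2-1) * (s^2*z^2-1) * (z^2-s^2)))
    + (4*((s^2+1)/(2*s))^2 - 3) * ((z^2+1)/(2*z)) * ((a1 - a3) * (s*z) / ((s^2-1)*(z^2-1)))
    + (s^2+1)/(2*s) * a2
    = ((((s^4*z^2+1)/(2*(s^2*z)) - Bn) * a1 - Cn * b1
        - ((z^2+s^4)/(2*(s^2*z)) - Bn) * a3 + Cn * b3) * (s*z)) /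
        ((s^2-1)*(z^2-1))
      + Bn * ((a1 - a3) * (s*z) / ((s^2-1)*(z^2-1)))
      + Cn * ((b1 - b3) * (s*z) / ((s^2-1)*(z^2-1))) := by
  have two : (2:ℂ) ≠ 0 := two_ne_zero
  have hd1 : (2 * s) ^ 2 * (2 * z) * ((s ^ 2 - 1) * (z ^ 2 - 1)) * (2 * s) ≠ 0 :=
    mul_ne_zero (mul_ne_zero (mul_ne_zero (pow_ne_zero _ (mul_ne_zero two hs0))
      (mul_ne_zero two hz0)) (mul_ne_zero hs2' hz2')) (mul_ne_zero two hs0)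
  have hd2 : 2 * (s ^ 2 * z) * ((s ^ 2 - 1) * (z ^ 2 - 1)) * ((s ^ 2 - 1) * (z ^ 2 - 1)) ≠ 0 :=
    mul_ne_zero (mul_ne_zero (mul_ne_zero two (mul_ne_zero (pow_ne_zero _ hs0) hz0))
      (mul_ne_zero hs2' hz2')) (mul_ne_zero hs2' hz2')
  have hd3 : (2 * s) ^ 2 * ((2 * s) ^ 2 * (2 * z) ^ 2) * ((2 * s) ^ 2 * (2 * z)) ^ 2 *
      ((s ^ 2 - 1) ^ 2 * (z ^ 2 - 1) * (s ^ 2 * z ^ 2 - 1) * (z ^ 2 - s ^ 2)) ≠ 0 := by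
    apply mul_ne_zero
    · apply mul_ne_zero
      · apply mul_ne_zero
        · exact pow_ne_zero _ (mul_ne_zero two hs0)
        · exact mul_ne_zero (pow_ne_zero _ (mul_ne_zero two hs0)) (pow_ne_zero _ (mul_ne_zero two hz0))
      · exact pow_ne_zero _ (mul_ne_zero (pow_ne_zero _ (mul_ne_zero two hs0)) (mul_ne_zero two hz0))
    · exact mul_ne_zero (mul_ne_zero (mul_ne_zero (pow_ne_zero _ hs2') hz2') hszsq) hzs
  field_simp [hs0, hz0, hs2', hz2', hszsq, hzs]
  have hdB : (2 * s) ^ 2 * ((2 * s) ^ 2 * (2 * z) ^ 2) * ((2 * s) ^ 2 * (2 * z)) ^ 2 *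
        ((s ^ 2 - 1) ^ 2 * (z ^ 2 - 1) * (s ^ 2 * z ^ 2 - 1) * (z ^ 2 - s ^ 2)) *
      ((2 * s) ^ 2 * (2 * z) * ((s ^ 2 - 1) * (z ^ 2 - 1))) ≠ 0 :=
    mul_ne_zero hd3 (mul_ne_zero (mul_ne_zero (pow_ne_zero _ (mul_ne_zero two hs0))
      (mul_ne_zero two hz0)) (mul_ne_zero hs2' hz2'))
  ring

end Aux

set_option maxHeartbeats 4000000 in
set_option maxRecDepth 100000 in
/-- `2(α²U₂ − U₁²)·𝒟_q² P_n + (4α²−3)·x·𝒟_q𝒮_q P_n + α·P_n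
  = 𝒟_q𝒮_q P_{n+1} + B_n·𝒟_q𝒮_q P_n + C_n·𝒟_q𝒮_q P_{n−1}`. -/
theorem stmt_13 (q : ℝ) (hq0 : 0 < q) (hq1 : q < 1)
    (D S : ℂ[X] → ℂ[X]) (hD : IsAWDiff q D) (hS : IsAWAvg q S)
    (P : ℕ → ℂ[X]) (B Cc : ℕ → ℂ)
    (hP0 : P 0 = 1) (hP1 : P 1 = X - C (B 0))
    (hrec : ∀ n, P (n + 2) = (X - C (B (n + 1))) * P (n + 1) - C (Cc (n + 1)) * P n)
    (hCc : ∀ n, 1 ≤ n → Cc n ≠ 0) :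
    ∀ n : ℕ, 1 ≤ n →
      C 2 * (C (awAlpha q ^ 2) * awU2 q - awU1 q ^ 2) * D (D (P n)) +
          C (4 * awAlpha q ^ 2 - 3) * X * D (S (P n)) + awAlpha q • P n =
        D (S (P (n + 1))) + C (B n) * D (S (P n)) + C (Cc n) * D (S (P (n - 1))) := by
  intro n hn
  obtain ⟨m, rfl⟩ : ∃ m, n = m + 1 := ⟨n - 1, (Nat.succ_pred_eq_of_pos hn).symm⟩
  simp only [Nat.add_sub_cancel]
  rw [show m + 1 + 1 = m + 2 from rfl, hrec m]
  have hsq0 : 0 < Real.sqrt q := Real.sqrt_pos.mpr hq0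
  have hsq1 : Real.sqrt q < 1 := by
    nlinarith [Real.sq_sqrt hq0.le, Real.sqrt_nonneg q]
  apply aw_eval_ext ((Real.sqrt q)⁻¹)
  intro t ht htc
  set z : ℂ := (t : ℂ) with hzdef
  set s : ℂ := awSqrt q with hsdef
  have hsre : s = ((Real.sqrt q : ℝ) : ℂ) := rfl
  have hs0 : s ≠ 0 := by
    rw [hsre]; exact_mod_cast hsq0.ne'
  have hs2 : s ^ 2 ≠ 1 := by
    rw [hsre]; intro h
    have h' : (Real.sqrt q) ^ 2 = 1 := by exact_mod_cast h
    nlinarith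
  -- facts about z
  have hz0 : z ≠ 0 := by
    rw [hzdef]; exact_mod_cast (by linarith : t ≠ 0)
  have hz1 : z ≠ 1 := by
    rw [hzdef]; exact_mod_cast (by linarith : t ≠ 1)
  have hzm1 : z ≠ -1 := by
    rw [hzdef]; intro h
    have : t = -1 := by exact_mod_cast h
    linarith
  have hz2 : z ^ 2 ≠ 1 := aw_sq_ne_one hz1 hzm1
  -- facts about s*z
  have hszc : s * z = ((Real.sqrt q * t : ℝ) : ℂ) := by rw [hsre, hzdef]; push_cast; ring
  have hsz0 : s * z ≠ 0 := mul_ne_zero hs0 hz0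
  have hsz1 : s * z ≠ 1 := by
    rw [hszc]; intro h
    have h' : Real.sqrt q * t = 1 := by exact_mod_cast h
    apply htc
    field_simp
    linear_combination h'
  have hszm1 : s * z ≠ -1 := by
    rw [hszc]; intro h
    have h' : Real.sqrt q * t = -1 := by exact_mod_cast h
    nlinarith
  have hsz2 : (s * z) ^ 2 ≠ 1 := aw_sq_ne_one hsz1 hszm1
  -- facts about s⁻¹*z
  have hiq1 : 1 < (Real.sqrt q)⁻¹ := by
    rw [lt_inv_comm₀ one_pos hsq0]; simpa using hsq1
  have hiszc : s⁻¹ * z = (((Real.sqrt q)⁻¹ * t : ℝ) : ℂ) := by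
    rw [hsre, hzdef]; push_cast; ring
  have higt : 2 < (Real.sqrt q)⁻¹ * t := by nlinarith
  have hisz0 : s⁻¹ * z ≠ 0 := mul_ne_zero (inv_ne_zero hs0) hz0
  have hisz1 : s⁻¹ * z ≠ 1 := by
    rw [hiszc]; intro h
    have h' : (Real.sqrt q)⁻¹ * t = 1 := by exact_mod_cast h
    linarith
  have hiszm1 : s⁻¹ * z ≠ -1 := by
    rw [hiszc]; intro h
    have h' : (Real.sqrt q)⁻¹ * t = -1 := by exact_mod_cast h
    linarith
  have hisz2 : (s⁻¹ * z) ^ 2 ≠ 1 := aw_sq_ne_one hisz1 hiszm1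
  -- cancellation facts
  have hc1 : s⁻¹ * (s * z) = z := inv_mul_cancel_left₀ hs0 z
  have hc2 : s * (s⁻¹ * z) = z := mul_inv_cancel_left₀ hs0 z
  -- the defining properties specialized
  have eD : ∀ f : ℂ[X], (D f).eval (awXmap z) =
      (f.eval (awXmap (s * z)) - f.eval (awXmap (s⁻¹ * z))) /
        (awXmap (s * z) - awXmap (s⁻¹ * z)) := fun f => hD f z hz0 hz1 hzm1
  have eDa : ∀ f : ℂ[X], (D f).eval (awXmap (s * z)) =
      (f.eval (awXmap (s * (s * z))) - f.eval (awXmap z)) /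
        (awXmap (s * (s * z)) - awXmap z) := by
    intro f
    have := hD f (s * z) hsz0 hsz1 hszm1
    rwa [hc1] at this
  have eDb : ∀ f : ℂ[X], (D f).eval (awXmap (s⁻¹ * z)) =
      (f.eval (awXmap z) - f.eval (awXmap (s⁻¹ * (s⁻¹ * z)))) /
        (awXmap z - awXmap (s⁻¹ * (s⁻¹ * z))) := by
    intro f
    have := hS
    have h2 := hD f (s⁻¹ * z) hisz0 hisz1 hiszm1
    rwa [hc2] at h2
  have eSa : ∀ f : ℂ[X], (S f).eval (awXmap (s * z)) =
      (f.eval (awXmap (s * (s * z))) + f.eval (awXmap z)) / 2 := by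
    intro f
    have := hS f (s * z) hsz0 hsz1 hszm1
    rwa [hc1] at this
  have eSb : ∀ f : ℂ[X], (S f).eval (awXmap (s⁻¹ * z)) =
      (f.eval (awXmap z) + f.eval (awXmap (s⁻¹ * (s⁻¹ * z)))) / 2 := by
    intro f
    have := hS f (s⁻¹ * z) hisz0 hisz1 hiszm1
    rwa [hc2] at this
  -- denominators
  have hss : s - s⁻¹ ≠ 0 := aw_sub_inv_ne hs0 hs2
  have hzz : z - z⁻¹ ≠ 0 := aw_sub_inv_ne hz0 hz2
  have hszz : s * z - (s * z)⁻¹ ≠ 0 := aw_sub_inv_ne hsz0 hsz2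
  have hiszz : s⁻¹ * z - (s⁻¹ * z)⁻¹ ≠ 0 := aw_sub_inv_ne hisz0 hisz2
  have hs2' : s ^ 2 - 1 ≠ 0 := sub_ne_zero.mpr hs2
  have hz2' : z ^ 2 - 1 ≠ 0 := sub_ne_zero.mpr hz2
  have hszsq : s ^ 2 * z ^ 2 - 1 ≠ 0 := by
    rw [← mul_pow]; exact sub_ne_zero.mpr hsz2
  have hzs : z ^ 2 - s ^ 2 ≠ 0 := by
    intro h
    apply hisz2
    rw [mul_pow, sub_eq_zero.mp h, inv_pow]
    exact inv_mul_cancel₀ (pow_ne_zero 2 hs0)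
  have d0 : awXmap (s * z) - awXmap (s⁻¹ * z) = (s ^ 2 - 1) * (z ^ 2 - 1) / (2 * s * z) := by
    rw [aw_denom_eq s z hs0 hz0]; field_simp
  have d1 : awXmap (s * (s * z)) - awXmap z =
      (s ^ 2 - 1) * (s ^ 2 * z ^ 2 - 1) / (2 * s ^ 2 * z) := by
    have h := aw_denom_eq s (s * z) hs0 hsz0
    rw [hc1] at h
    rw [h]; field_simp
  have d2 : awXmap z - awXmap (s⁻¹ * (s⁻¹ * z)) =
      (s ^ 2 - 1) * (z ^ 2 - s ^ 2) / (2 * s ^ 2 * z) := by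
    have h := aw_denom_eq s (s⁻¹ * z) hs0 hisz0
    rw [hc2] at h
    rw [h]; field_simp
  -- closed forms for the operator values
  have hDSn : (D (S (P (m+1)))).eval (awXmap z)
      = ((P (m+1)).eval (awXmap (s * (s * z))) - (P (m+1)).eval (awXmap (s⁻¹ * (s⁻¹ * z))))
          * (s * z) / ((s ^ 2 - 1) * (z ^ 2 - 1)) := by
    rw [eD, eSa, eSb, d0]
    field_simp [hs0, hz0, hs2', hz2']
    ring
  have hDSm : (D (S (P m))).eval (awXmap z)
      = ((P m).eval (awXmap (s * (s * z))) - (P m).eval (awXmap (s⁻¹ * (s⁻¹ * z))))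
          * (s * z) / ((s ^ 2 - 1) * (z ^ 2 - 1)) := by
    rw [eD, eSa, eSb, d0]
    field_simp [hs0, hz0, hs2', hz2']
    ring
  have hDSp : (D (S ((X - C (B (m + 1))) * P (m + 1) - C (Cc (m + 1)) * P m))).eval (awXmap z)
      = (((awXmap (s * (s * z)) - B (m + 1)) * (P (m+1)).eval (awXmap (s * (s * z)))
            - Cc (m + 1) * (P m).eval (awXmap (s * (s * z)))
            - (awXmap (s⁻¹ * (s⁻¹ * z)) - B (m + 1)) * (P (m+1)).eval (awXmap (s⁻¹ * (s⁻¹ * z)))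
            + Cc (m + 1) * (P m).eval (awXmap (s⁻¹ * (s⁻¹ * z))))
          * (s * z)) / ((s ^ 2 - 1) * (z ^ 2 - 1)) := by
    rw [eD, eSa, eSb, d0]
    simp only [eval_sub, eval_mul, eval_X, eval_C]
    field_simp [hs0, hz0, hs2', hz2']
    ring
  have hDD : (D (D (P (m+1)))).eval (awXmap z)
      = (((P (m+1)).eval (awXmap (s * (s * z))) - (P (m+1)).eval (awXmap z)) * (z ^ 2 - s ^ 2)
          - ((P (m+1)).eval (awXmap z) - (P (m+1)).eval (awXmap (s⁻¹ * (s⁻¹ * z)))) * (s ^ 2 * z ^ 2 - 1))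
          * (4 * s ^ 3 * z ^ 2)
          / ((s ^ 2 - 1) ^ 2 * (z ^ 2 - 1) * (s ^ 2 * z ^ 2 - 1) * (z ^ 2 - s ^ 2)) := by
    rw [eD, eDa, eDb, d0, d1, d2]
    field_simp [hs0, hz0, hs2', hz2', hszsq, hzs]
    ring
  have hal : (s + s⁻¹) / 2 = (s ^ 2 + 1) / (2 * s) := by
    field_simp
  have hxz : (z + z⁻¹) / 2 = (z ^ 2 + 1) / (2 * z) := by
    field_simp
  have hx1 : (s * (s * z) + (s * (s * z))⁻¹) / 2 = (s ^ 4 * z ^ 2 + 1) / (2 * (s ^ 2 * z)) := by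
    field_simp
  have hx3 : (s⁻¹ * (s⁻¹ * z) + (s⁻¹ * (s⁻¹ * z))⁻¹) / 2 = (z ^ 2 + s ^ 4) / (2 * (s ^ 2 * z)) := by
    field_simp
  simp only [eval_add, eval_mul, eval_smul, smul_eq_mul, eval_C, eval_X, eval_sub,
    eval_pow, eval_one, awU1, awU2]
  rw [hDD, hDSn, hDSm, hDSp]
  set a1 := (P (m+1)).eval (awXmap (s * (s * z))) with ha1
  set a2 := (P (m+1)).eval (awXmap z) with ha2
  set a3 := (P (m+1)).eval (awXmap (s⁻¹ * (s⁻¹ * z))) with ha3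
  set b1 := (P m).eval (awXmap (s * (s * z))) with hb1
  set b2 := (P m).eval (awXmap z) with hb2
  set b3 := (P m).eval (awXmap (s⁻¹ * (s⁻¹ * z))) with hb3
  have key := aw_core_s13 s z a1 a2 a3 b1 b2 b3
    (B (m+1)) (Cc (m+1)) hs0 hz0 hs2' hz2' hszsq hzs
  simp only [awXmap, awAlpha]
  rw [← hsdef, hal, hxz, hx1, hx3]
  linear_combination key
end

section
/- Fix a real q with 0<q<1. Let (P_n)_{n≥0} be a monic OPS with recurrence coefficients B_n and C_n (C_n≠0). Then for every n≥1, one has the identity of polynomials 2·𝒟_q(𝒮_q P_n) + (x − B_n)·𝒟_q(𝒟_q P_n) = 𝒟_q(𝒟_q P_{n+1}) + C_n·𝒟_q(𝒟_q P_{n−1}). -/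
open Polynomial

private lemma aw_key_15 (q : ℝ) (hq0 : 0 < q) (hq1 : q < 1)
    (D S : ℂ[X] → ℂ[X]) (hD : IsAWDiff q D) (hS : IsAWAvg q S)
    (P : ℕ → ℂ[X]) (B Cc : ℕ → ℂ)
    (hrec : ∀ n, P (n + 2) = (X - C (B (n + 1))) * P (n + 1) - C (Cc (n + 1)) * P n)
    (m : ℕ)
    (z : ℂ) (hz0 : z ≠ 0) (hz1 : z ≠ 1) (hz1' : z ≠ -1)
    (ha1 : awSqrt q * z ≠ 1) (ha2 : awSqrt q * z ≠ -1)
    (hb1 : (awSqrt q)⁻¹ * z ≠ 1) (hb2 : (awSqrt q)⁻¹ * z ≠ -1) :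
    (C 2 * D (S (P (m+1))) + (X - C (B (m+1))) * D (D (P (m+1))) -
      (D (D (P (m+1+1))) + C (Cc (m+1)) * D (D (P m)))).eval (awXmap z) = 0 := by
  have hsq0 : 0 < Real.sqrt q := Real.sqrt_pos.mpr hq0
  have hs0 : awSqrt q ≠ 0 := by
    simp only [awSqrt, ne_eq, Complex.ofReal_eq_zero]; exact hsq0.ne'
  have hss : awSqrt q * awSqrt q = (q : ℂ) := by
    simp only [awSqrt, ← Complex.ofReal_mul, Real.mul_self_sqrt hq0.le]
  have hssne : awSqrt q * awSqrt q - 1 ≠ 0 := by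
    rw [hss, sub_ne_zero]
    exact_mod_cast hq1.ne
  have hsz0 : awSqrt q * z ≠ 0 := mul_ne_zero hs0 hz0
  have hszi0 : (awSqrt q)⁻¹ * z ≠ 0 := mul_ne_zero (inv_ne_zero hs0) hz0
  -- denominators
  have hdd : awXmap (awSqrt q * z) - awXmap ((awSqrt q)⁻¹ * z) ≠ 0 := by
    have : awXmap (awSqrt q * z) - awXmap ((awSqrt q)⁻¹ * z) =
        (awSqrt q * awSqrt q - 1) * (z - 1) * (z + 1) / (2 * awSqrt q * z) := by
      unfold awXmap; field_simp; ring
    rw [this]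
    exact div_ne_zero (mul_ne_zero (mul_ne_zero hssne (sub_ne_zero.mpr hz1))
      (by intro h; exact hz1' (by linear_combination h)))
      (by simp [hs0, hz0])
  have hdp : awXmap (awSqrt q * (awSqrt q * z)) - awXmap z ≠ 0 := by
    have : awXmap (awSqrt q * (awSqrt q * z)) - awXmap z =
        (awSqrt q * awSqrt q - 1) * (awSqrt q * z - 1) * (awSqrt q * z + 1) /
          (2 * (awSqrt q * awSqrt q) * z) := by
      unfold awXmap; field_simp; ring
    rw [this]
    exact div_ne_zero (mul_ne_zero (mul_ne_zero hssne (sub_ne_zero.mpr ha1))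
      (by intro h; exact ha2 (by linear_combination h)))
      (by simp [hs0, hz0])
  have hdm : awXmap z - awXmap ((awSqrt q)⁻¹ * ((awSqrt q)⁻¹ * z)) ≠ 0 := by
    have heq : (awXmap z - awXmap ((awSqrt q)⁻¹ * ((awSqrt q)⁻¹ * z))) *
        (2 * (awSqrt q * awSqrt q) * z) =
        (awSqrt q * awSqrt q - 1) * (z - awSqrt q) * (z + awSqrt q) := by
      unfold awXmap
      simp only [mul_inv, inv_inv]
      linear_combination (awSqrt q^2 - awSqrt q^4) * (mul_inv_cancel₀ hz0) -
        z^2*(awSqrt q*(awSqrt q)⁻¹+1) * (mul_inv_cancel₀ hs0)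
    have hN : (awSqrt q * awSqrt q - 1) * (z - awSqrt q) * (z + awSqrt q) ≠ 0 := by
      refine mul_ne_zero (mul_ne_zero hssne ?_) ?_
      · intro h
        exact hb1 (by rw [sub_eq_zero] at h; rw [h]; exact inv_mul_cancel₀ hs0)
      · intro h
        apply hb2
        have hz : z = -awSqrt q := by linear_combination h
        rw [hz, mul_neg, inv_mul_cancel₀ hs0]
    intro h
    rw [h, zero_mul] at heq
    exact hN heq.symm
  have e0 := hD (S (P (m+1))) z hz0 hz1 hz1'
  have e1 := hD (D (P (m+1))) z hz0 hz1 hz1'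
  have e2 := hD (D (P (m+1+1))) z hz0 hz1 hz1'
  have e3 := hD (D (P m)) z hz0 hz1 hz1'
  have eS1 := hS (P (m+1)) (awSqrt q * z) hsz0 ha1 ha2
  have eS2 := hS (P (m+1)) ((awSqrt q)⁻¹ * z) hszi0 hb1 hb2
  have eD1 := hD (P (m+1)) (awSqrt q * z) hsz0 ha1 ha2
  have eD2 := hD (P (m+1)) ((awSqrt q)⁻¹ * z) hszi0 hb1 hb2
  have eE1 := hD (P (m+1+1)) (awSqrt q * z) hsz0 ha1 ha2
  have eE2 := hD (P (m+1+1)) ((awSqrt q)⁻¹ * z) hszi0 hb1 hb2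
  have eF1 := hD (P m) (awSqrt q * z) hsz0 ha1 ha2
  have eF2 := hD (P m) ((awSqrt q)⁻¹ * z) hszi0 hb1 hb2
  have hr : P (m+1+1) = (X - C (B (m+1))) * P (m+1) - C (Cc (m+1)) * P m := hrec m
  simp only [inv_mul_cancel_left₀ hs0, mul_inv_cancel_left₀ hs0] at eS1 eS2 eD1 eD2 eE1 eE2 eF1 eF2
  simp only [eval_sub, eval_add, eval_mul, eval_X, eval_C, e0, e1, e2, e3]
  rw [eS1, eS2, eD1, eD2, eE1, eE2, eF1, eF2]
  simp only [hr, eval_sub, eval_mul, eval_X, eval_C]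
  set X0 := awXmap z
  set Xp := awXmap (awSqrt q * (awSqrt q * z))
  set Xm := awXmap ((awSqrt q)⁻¹ * ((awSqrt q)⁻¹ * z))
  set Yp := awXmap (awSqrt q * z)
  set Ym := awXmap ((awSqrt q)⁻¹ * z)
  field_simp
  ring


private lemma aw_inj_15 {t u : ℝ} (ht : 1 < t) (hu : 1 < u)
    (h : awXmap t = awXmap u) : t = u := by
  have ht0 : t ≠ 0 := by positivity
  have hu0 : u ≠ 0 := by positivity
  unfold awXmap at h
  have h' : (t + t⁻¹) / 2 = (u + u⁻¹) / 2 := by exact_mod_cast h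
  have h2 : (t - u) * (t * u - 1) = 0 := by
    field_simp at h'
    nlinarith [h']
  rcases mul_eq_zero.mp h2 with h3 | h3
  · linarith [sub_eq_zero.mp h3]
  · nlinarith


/-- `2·𝒟_q𝒮_q P_n + (x − B_n)·𝒟_q² P_n = 𝒟_q² P_{n+1} + C_n·𝒟_q² P_{n−1}`. -/
theorem stmt_15 (q : ℝ) (hq0 : 0 < q) (hq1 : q < 1)
    (D S : ℂ[X] → ℂ[X]) (hD : IsAWDiff q D) (hS : IsAWAvg q S)
    (P : ℕ → ℂ[X]) (B Cc : ℕ → ℂ)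
    (hP0 : P 0 = 1) (hP1 : P 1 = X - C (B 0))
    (hrec : ∀ n, P (n + 2) = (X - C (B (n + 1))) * P (n + 1) - C (Cc (n + 1)) * P n)
    (hCc : ∀ n, 1 ≤ n → Cc n ≠ 0) :
    ∀ n : ℕ, 1 ≤ n →
      C 2 * D (S (P n)) + (X - C (B n)) * D (D (P n)) =
        D (D (P (n + 1))) + C (Cc n) * D (D (P (n - 1))) := by
  intro n hn
  obtain ⟨m, rfl⟩ : ∃ m, n = m + 1 := ⟨n - 1, (Nat.succ_pred_eq_of_pos hn).symm⟩
  simp only [Nat.add_sub_cancel]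
  rw [← sub_eq_zero]
  apply Polynomial.eq_zero_of_infinite_isRoot
  have hsq0 : 0 < Real.sqrt q := Real.sqrt_pos.mpr hq0
  have hsq1 : Real.sqrt q < 1 := by
    nlinarith [Real.sq_sqrt hq0.le, Real.sqrt_nonneg q]
  have hT : (Set.Ioo (1:ℝ) 2 \ {(Real.sqrt q)⁻¹}).Infinite :=
    (Set.Ioo_infinite (by norm_num)).diff (Set.finite_singleton _)
  have hinj : Set.InjOn (fun t : ℝ => awXmap (t : ℂ)) (Set.Ioo (1:ℝ) 2 \ {(Real.sqrt q)⁻¹}) := by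
    intro t ht u hu h
    exact aw_inj_15 ht.1.1 hu.1.1 h
  refine Set.Infinite.mono ?_ (hT.image hinj)
  rintro x ⟨t, ⟨⟨ht1, ht2⟩, htne⟩, rfl⟩
  have htne' : t ≠ (Real.sqrt q)⁻¹ := by simpa using htne
  have ht0 : (0:ℝ) < t := by linarith
  apply aw_key_15 q hq0 hq1 D S hD hS P B Cc hrec m
  · exact_mod_cast ht0.ne'
  · intro h; have h2 : t = 1 := by exact_mod_cast h
    linarith
  · intro h; have h2 : t = -1 := by exact_mod_cast h
    linarith
  · intro h
    have h' : Real.sqrt q * t = 1 := by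
      simpa [awSqrt, ← Complex.ofReal_mul] using h
    exact htne' (by field_simp; linarith [h'])
  · intro h
    have h' : Real.sqrt q * t = -1 := by
      have h2 : ((Real.sqrt q * t : ℝ) : ℂ) = -1 := by
        simpa [awSqrt, ← Complex.ofReal_mul] using h
      exact_mod_cast h2
    nlinarith
  · intro h
    have h' : (Real.sqrt q)⁻¹ * t = 1 := by
      simpa [awSqrt, ← Complex.ofReal_inv, ← Complex.ofReal_mul] using h
    have hgt : 1 < (Real.sqrt q)⁻¹ := by
      rw [lt_inv_comm₀] <;> simp [hsq0, hsq1]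
    nlinarith
  · intro h
    have h' : (Real.sqrt q)⁻¹ * t = -1 := by
      have h2 : (((Real.sqrt q)⁻¹ * t : ℝ) : ℂ) = -1 := by
        simpa [awSqrt, ← Complex.ofReal_inv, ← Complex.ofReal_mul] using h
      exact_mod_cast h2
    have hpos : 0 < (Real.sqrt q)⁻¹ * t := by positivity
    linarith
end
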